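/- arXiv:1405.6883 — 4 statements merged into one kernel-verified Lean document; each statement's English description precedes it below -/
import Mathlib

section
/- The surface energy density g satisfies g(0) = 0 and g is subadditive: g(s₁ + s₂) ≤ g(s₁) + g(s₂) for all s₁, s₂ ≥ 0. -/
open MeasureTheory Set Filter Topology

/-- A pair of `H¹` functions on the interval `(0,T)`, described through their
absolutely continuous representatives `a`, `b` together with their
square-integrable weak derivatives `da`, `db`. -/
structure H1Pair (T : ℝ) where
  a : ℝ → ℝ
  b : ℝ → ℝ
  da : ℝ → ℝ
  db : ℝ → ℝ
  da_mem : MeasureTheory.MemLp da 2 (MeasureTheory.volume.restrict (Set.Ioo (0:ℝ) T))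
  db_mem : MeasureTheory.MemLp db 2 (MeasureTheory.volume.restrict (Set.Ioo (0:ℝ) T))
  a_ftc : ∀ x ∈ Set.Icc (0:ℝ) T, a x = a 0 + ∫ t in Set.Ioc (0:ℝ) x, da t
  b_ftc : ∀ x ∈ Set.Icc (0:ℝ) T, b x = b 0 + ∫ t in Set.Ioc (0:ℝ) x, db t

/-- Membership in the admissible class `U_s(0,T)`: `0 ≤ β ≤ 1`, `α(0)=0`, `α(T)=s`,
`β(0)=β(T)=1`. -/
def H1Pair.Admissible {T : ℝ} (s : ℝ) (P : H1Pair T) : Prop :=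
  (∀ t ∈ Set.Icc (0:ℝ) T, P.b t ∈ Set.Icc (0:ℝ) 1) ∧
  P.a 0 = 0 ∧ P.a T = s ∧ P.b 0 = 1 ∧ P.b T = 1

/-- The continuous extension of `x ↦ (1 - x) * f x` to `[0,1]`, with value `l` at `1`. -/
noncomputable def damageExt (f : ℝ → ℝ) (l : ℝ) (x : ℝ) : ℝ :=
  if x = 1 then l else (1 - x) * f x

/-- The surface energy of a pair: `∫₀¹ |1-β| √(f(β)² |α'|² + |β'|²) dt`, written as
`∫₀¹ √(((1-β) f(β))² |α'|² + (1-β)² |β'|²) dt`, where at points with `β = 1` the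
product `(1-β) f(β)` is interpreted as `l`. -/
noncomputable def surfEnergy (f : ℝ → ℝ) (l : ℝ) (P : H1Pair 1) : ENNReal :=
  ∫⁻ t in Set.Ioo (0:ℝ) 1,
    ENNReal.ofReal (Real.sqrt ((damageExt f l (P.b t))^2 * (P.da t)^2
      + (1 - P.b t)^2 * (P.db t)^2))

/-- The surface energy density `g(s)`. -/
noncomputable def surfDensity (f : ℝ → ℝ) (l : ℝ) (s : ℝ) : ℝ :=
  (⨅ (P : H1Pair 1) (_ : P.Admissible s), surfEnergy f l P).toReal

/-- `f` is an admissible damage function with limit value `l`: it is continuous,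
nondecreasing and nonnegative on `[0,1)`, vanishes exactly at `0`, `l ∈ (0,∞)`, and
`(1-s) f(s) → l` as `s → 1⁻`. -/
def AdmissibleDamage (f : ℝ → ℝ) (l : ℝ) : Prop :=
  ContinuousOn f (Set.Ico 0 1) ∧
  MonotoneOn f (Set.Ico 0 1) ∧
  (∀ x ∈ Set.Ico (0:ℝ) 1, 0 ≤ f x) ∧
  (∀ x ∈ Set.Ico (0:ℝ) 1, (f x = 0 ↔ x = 0)) ∧
  0 < l ∧
  Filter.Tendsto (fun x => (1 - x) * f x) (nhdsWithin 1 (Set.Iio 1)) (nhds l)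


open intervalIntegral

noncomputable def DD (f : ℝ → ℝ) (l : ℝ) : ℝ → ℝ :=
  fun x => if 1 ≤ x then l else (1 - max x 0) * f (max x 0)

theorem DD_eq (f : ℝ → ℝ) (l : ℝ) {x : ℝ} (hx : x ∈ Icc (0:ℝ) 1) :
    DD f l x = (if x = 1 then l else (1 - x) * f x) := by
  rcases eq_or_lt_of_le hx.2 with h | h
  · simp [DD, h]
  · rw [DD, if_neg (not_le.mpr h), if_neg (ne_of_lt h), max_eq_left hx.1]

theorem continuous_DD (f : ℝ → ℝ) (l : ℝ)
    (hf : ContinuousOn f (Set.Ico 0 1))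
    (hl : Filter.Tendsto (fun x => (1 - x) * f x) (nhdsWithin 1 (Set.Iio 1)) (nhds l)) :
    Continuous (DD f l) := by
  have hG : ContinuousOn (fun y : ℝ => (1 - y) * f y) (Ico 0 1) :=
    (continuousOn_const.sub continuousOn_id).mul hf
  rw [continuous_iff_continuousAt]
  intro x
  rcases lt_trichotomy x 1 with hx | hx | hx
  · -- x < 1 : DD = G ∘ clamp near x
    have hclamp : Tendsto (fun y : ℝ => max y 0) (nhds x)
        (nhdsWithin (max x 0) (Ico 0 1)) := by
      rw [tendsto_nhdsWithin_iff]
      refine ⟨(continuous_id.max continuous_const).continuousAt, ?_⟩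
      filter_upwards [eventually_lt_nhds hx] with y hy
      exact ⟨le_max_right _ _, by simp [max_lt_iff, hy, zero_lt_one]⟩
    have hmem : max x 0 ∈ Ico (0:ℝ) 1 := ⟨le_max_right _ _, by simp [max_lt_iff, hx, zero_lt_one]⟩
    have h1 : ContinuousAt (fun y : ℝ => (1 - max y 0) * f (max y 0)) x :=
      (hG (max x 0) hmem).tendsto.comp hclamp
    refine h1.congr ?_
    filter_upwards [eventually_lt_nhds hx] with y hy
    simp [DD, not_le.mpr hy]
  · -- x = 1
    subst hx
    have : Tendsto (DD f l) (nhds 1) (nhds l) := by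
      rw [← nhdsLT_sup_nhdsGE (1:ℝ), tendsto_sup]
      constructor
      · refine hl.congr' ?_
        filter_upwards [eventually_nhdsWithin_of_eventually_nhds
            (eventually_gt_nhds (by norm_num : (0:ℝ) < 1)),
          self_mem_nhdsWithin] with y hy0 hy1
        rw [DD, if_neg (not_le.mpr hy1), max_eq_left (le_of_lt hy0)]
      · refine tendsto_const_nhds.congr' ?_
        filter_upwards [self_mem_nhdsWithin] with y hy
        simp [DD, mem_Ici.mp hy]
    have hval : DD f l 1 = l := by simp [DD]
    rw [ContinuousAt, hval]
    exact this
  · -- 1 < x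
    have : ContinuousAt (fun _ : ℝ => l) x := continuousAt_const
    refine this.congr ?_
    filter_upwards [eventually_gt_nhds hx] with y hy
    simp [DD, le_of_lt hy]

instance fin_restrict_Ioo (a b : ℝ) : IsFiniteMeasure (volume.restrict (Ioo a b)) :=
  ⟨by rw [Measure.restrict_apply_univ]; exact measure_Ioo_lt_top⟩


theorem map_half : Measure.map (fun t : ℝ => 2*t) (volume.restrict (Ioo 0 2⁻¹))
    = ENNReal.ofReal 2⁻¹ • volume.restrict (Ioo 0 1) := by
  have hpre : Ioo (0:ℝ) 2⁻¹ = (fun t : ℝ => 2*t) ⁻¹' (Ioo 0 1) := by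
    ext t; simp only [mem_preimage, mem_Ioo]; constructor <;> intro h <;>
      constructor <;> linarith [h.1, h.2]
  rw [hpre, ← Measure.restrict_map (measurable_const_mul 2) measurableSet_Ioo,
    Real.map_volume_mul_left (two_ne_zero), Measure.restrict_smul]
  norm_num [abs_of_pos]

theorem map_half' : Measure.map (fun t : ℝ => 2*t - 1) (volume.restrict (Ioo 2⁻¹ 1))
    = ENNReal.ofReal 2⁻¹ • volume.restrict (Ioo 0 1) := by
  have hpre : Ioo (2⁻¹:ℝ) 1 = (fun t : ℝ => 2*t - 1) ⁻¹' (Ioo 0 1) := by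
    ext t; simp only [mem_preimage, mem_Ioo]; constructor <;> intro h <;>
      constructor <;> linarith [h.1, h.2]
  have hmeas : Measurable (fun t : ℝ => 2*t - 1) :=
    (measurable_const_mul 2).sub measurable_const
  rw [hpre, ← Measure.restrict_map hmeas measurableSet_Ioo]
  have hcomp : (fun t : ℝ => 2*t - 1) = (fun x : ℝ => x + (-1)) ∘ (fun t : ℝ => 2*t) := by
    ext t; simp [sub_eq_add_neg]
  rw [hcomp, ← Measure.map_map (measurable_add_const (-1)) (measurable_const_mul 2),
    Real.map_volume_mul_left (two_ne_zero), Measure.map_smul,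
    map_add_right_eq_self volume (-1), Measure.restrict_smul]
  norm_num [abs_of_pos]

theorem memLp_comp_half {u : ℝ → ℝ} (hu : MemLp u 2 (volume.restrict (Ioo 0 1))) :
    MemLp (fun t => u (2*t)) 2 (volume.restrict (Ioo (0:ℝ) 2⁻¹)) := by
  have hmp : MeasurePreserving (fun t : ℝ => 2*t) (volume.restrict (Ioo 0 2⁻¹))
      (ENNReal.ofReal 2⁻¹ • volume.restrict (Ioo 0 1)) :=
    ⟨measurable_const_mul 2, map_half⟩
  exact (hu.smul_measure (by simp)).comp_measurePreserving hmp

theorem memLp_comp_half' {u : ℝ → ℝ} (hu : MemLp u 2 (volume.restrict (Ioo 0 1))) :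
    MemLp (fun t => u (2*t - 1)) 2 (volume.restrict (Ioo (2⁻¹:ℝ) 1)) := by
  have hmp : MeasurePreserving (fun t : ℝ => 2*t - 1) (volume.restrict (Ioo 2⁻¹ 1))
      (ENNReal.ofReal 2⁻¹ • volume.restrict (Ioo 0 1)) :=
    ⟨(measurable_const_mul 2).sub measurable_const, map_half'⟩
  exact (hu.smul_measure (by simp)).comp_measurePreserving hmp

theorem lintegral_comp_half {F : ℝ → ENNReal}
    (hF : AEMeasurable F (volume.restrict (Ioo 0 1))) :
    ∫⁻ t in Ioo (0:ℝ) 2⁻¹, F (2*t) = ENNReal.ofReal 2⁻¹ * ∫⁻ t in Ioo (0:ℝ) 1, F t := by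
  have h1 : AEMeasurable F (Measure.map (fun t : ℝ => 2*t) (volume.restrict (Ioo 0 2⁻¹))) := by
    rw [map_half]; exact hF.smul_measure _
  rw [← lintegral_map' h1 (measurable_const_mul 2).aemeasurable, map_half,
    lintegral_smul_measure, smul_eq_mul]

theorem lintegral_comp_half' {F : ℝ → ENNReal}
    (hF : AEMeasurable F (volume.restrict (Ioo 0 1))) :
    ∫⁻ t in Ioo (2⁻¹:ℝ) 1, F (2*t - 1) = ENNReal.ofReal 2⁻¹ * ∫⁻ t in Ioo (0:ℝ) 1, F t := by
  have h1 : AEMeasurable F (Measure.map (fun t : ℝ => 2*t - 1) (volume.restrict (Ioo 2⁻¹ 1))) := by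
    rw [map_half']; exact hF.smul_measure _
  rw [← lintegral_map' h1 ((measurable_const_mul 2).sub measurable_const).aemeasurable, map_half',
    lintegral_smul_measure, smul_eq_mul]

theorem integral_comp_half (u : ℝ → ℝ) {x : ℝ} (hx : 0 ≤ x) :
    ∫ t in Ioc (0:ℝ) x, 2 * u (2*t) = ∫ t in Ioc (0:ℝ) (2*x), u t := by
  rw [← intervalIntegral.integral_of_le hx, ← intervalIntegral.integral_of_le (by linarith),
    intervalIntegral.integral_const_mul, intervalIntegral.integral_comp_mul_left u two_ne_zero]
  simp [mul_zero]

theorem integral_comp_half' (u : ℝ → ℝ) {x : ℝ} (hx : (2⁻¹:ℝ) ≤ x) :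
    ∫ t in Ioc (2⁻¹:ℝ) x, 2 * u (2*t - 1) = ∫ t in Ioc (0:ℝ) (2*x - 1), u t := by
  rw [← intervalIntegral.integral_of_le hx, ← intervalIntegral.integral_of_le (by linarith),
    intervalIntegral.integral_const_mul, intervalIntegral.integral_comp_mul_sub u two_ne_zero 1]
  norm_num
  ring

-- Pair-level lemmas
namespace H1Pair

theorem da_intOn (P : H1Pair 1) : IntegrableOn P.da (Ioo 0 1) volume :=
  memLp_one_iff_integrable.mp (P.da_mem.mono_exponent (by norm_num))

theorem db_intOn (P : H1Pair 1) : IntegrableOn P.db (Ioo 0 1) volume :=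
  memLp_one_iff_integrable.mp (P.db_mem.mono_exponent (by norm_num))

theorem db_intOn_Icc (P : H1Pair 1) : IntegrableOn P.db (Icc 0 1) volume := by
  rw [integrableOn_Icc_iff_integrableOn_Ioo]; exact P.db_intOn

theorem bMeas (P : H1Pair 1) : AEMeasurable P.b (volume.restrict (Ioo 0 1)) := by
  have hcont : ContinuousOn (fun x => ∫ t in Ioc (0:ℝ) x, P.db t) (Icc 0 1) :=
    continuousOn_primitive P.db_intOn_Icc
  have hc : ContinuousOn (fun x => P.b 0 + ∫ t in Ioc (0:ℝ) x, P.db t) (Ioo 0 1) :=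
    (continuousOn_const.add hcont).mono Ioo_subset_Icc_self
  refine (hc.aemeasurable measurableSet_Ioo).congr ?_
  filter_upwards [ae_restrict_mem measurableSet_Ioo] with x hx
  exact (P.b_ftc x (Ioo_subset_Icc_self hx)).symm

end H1Pair

/-- The "nice" integrand built from the continuous extension `DD`. -/
noncomputable def nice (f : ℝ → ℝ) (l : ℝ) (P : H1Pair 1) : ℝ → ENNReal :=
  fun t => ENNReal.ofReal (Real.sqrt ((DD f l (P.b t))^2 * (P.da t)^2
    + (1 - P.b t)^2 * (P.db t)^2))

theorem surfEnergy_eq_nice (f : ℝ → ℝ) (l : ℝ) (P : H1Pair 1)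
    (hb : ∀ t ∈ Icc (0:ℝ) 1, P.b t ∈ Icc (0:ℝ) 1) :
    surfEnergy f l P = ∫⁻ t in Ioo (0:ℝ) 1, nice f l P t := by
  refine lintegral_congr_ae ?_
  filter_upwards [ae_restrict_mem measurableSet_Ioo] with t ht
  have := DD_eq f l (hb t (Ioo_subset_Icc_self ht))
  rw [nice, damageExt, ← this]

theorem niceMeas (f : ℝ → ℝ) (l : ℝ) (hD : Continuous (DD f l)) (P : H1Pair 1) :
    AEMeasurable (nice f l P) (volume.restrict (Ioo 0 1)) := by
  have hb := P.bMeas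
  have hda : AEMeasurable P.da (volume.restrict (Ioo 0 1)) :=
    P.da_mem.aestronglyMeasurable.aemeasurable
  have hdb : AEMeasurable P.db (volume.restrict (Ioo 0 1)) :=
    P.db_mem.aestronglyMeasurable.aemeasurable
  have hDb : AEMeasurable (fun t => DD f l (P.b t)) (volume.restrict (Ioo 0 1)) :=
    hD.measurable.comp_aemeasurable hb
  exact ENNReal.measurable_ofReal.comp_aemeasurable
    (Real.continuous_sqrt.measurable.comp_aemeasurable
      (((hDb.pow_const 2).mul (hda.pow_const 2)).add
        (((aemeasurable_const.sub hb).pow_const 2).mul (hdb.pow_const 2))))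

theorem glue_mem {u₁ u₂ : ℝ → ℝ} (h₁ : MemLp u₁ 2 (volume.restrict (Ioo 0 1)))
    (h₂ : MemLp u₂ 2 (volume.restrict (Ioo 0 1))) :
    MemLp (fun t => if t < (2⁻¹:ℝ) then 2 * u₁ (2*t) else 2 * u₂ (2*t-1)) 2
      (volume.restrict (Ioo 0 1)) := by
  have key : (fun t => if t < (2⁻¹:ℝ) then 2 * u₁ (2*t) else 2 * u₂ (2*t-1))
      = (Iio (2⁻¹:ℝ)).indicator (fun t => 2 * u₁ (2*t))
        + (Ici (2⁻¹:ℝ)).indicator (fun t => 2 * u₂ (2*t-1)) := by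
    ext t
    by_cases h : t < (2⁻¹:ℝ) <;>
      simp [Set.indicator_apply, h, mem_Iio, mem_Ici, not_lt.mp, le_of_not_gt]
  rw [key]
  refine MemLp.add ?_ ?_
  · rw [memLp_indicator_iff_restrict measurableSet_Iio,
      Measure.restrict_restrict measurableSet_Iio]
    have : Iio (2⁻¹:ℝ) ∩ Ioo 0 1 = Ioo (0:ℝ) 2⁻¹ := by
      rw [inter_comm, Ioo_inter_Iio]
      norm_num
    rw [this]
    exact (memLp_comp_half h₁).const_mul 2
  · rw [memLp_indicator_iff_restrict measurableSet_Ici,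
      Measure.restrict_restrict measurableSet_Ici]
    have h1 : Ici (2⁻¹:ℝ) ∩ Ioo 0 1 = Ico (2⁻¹:ℝ) 1 := by
      ext t
      simp only [mem_inter_iff, mem_Ici, mem_Ioo, mem_Ico]
      constructor
      · rintro ⟨h1, _, h3⟩; exact ⟨h1, h3⟩
      · rintro ⟨h1, h2⟩; exact ⟨h1, by linarith, h2⟩
    rw [h1, Measure.restrict_congr_set Ioo_ae_eq_Ico.symm]
    exact (memLp_comp_half' h₂).const_mul 2

-- auxiliary integrability
theorem intOn_left {u : ℝ → ℝ} (hu : MemLp u 2 (volume.restrict (Ioo 0 1))) :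
    IntegrableOn (fun t => 2 * u (2*t)) (Ioc (0:ℝ) 2⁻¹) volume := by
  rw [integrableOn_Ioc_iff_integrableOn_Ioo]
  exact memLp_one_iff_integrable.mp
    (((memLp_comp_half hu).const_mul 2).mono_exponent (by norm_num))

theorem intOn_right {u : ℝ → ℝ} (hu : MemLp u 2 (volume.restrict (Ioo 0 1))) :
    IntegrableOn (fun t => 2 * u (2*t - 1)) (Ioc (2⁻¹:ℝ) 1) volume := by
  rw [integrableOn_Ioc_iff_integrableOn_Ioo]
  exact memLp_one_iff_integrable.mp
    (((memLp_comp_half' hu).const_mul 2).mono_exponent (by norm_num))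

theorem ae_ne_half : ∀ᵐ t : ℝ ∂volume, t ≠ (2⁻¹:ℝ) := by
  rw [ae_iff]
  simp only [ne_eq, not_not, setOf_eq_eq_singleton]
  exact measure_singleton _

theorem prim_left (u₁ u₂ : ℝ → ℝ) {x : ℝ} (hx : x ∈ Icc (0:ℝ) 2⁻¹) :
    ∫ t in Ioc (0:ℝ) x, (if t < 2⁻¹ then 2 * u₁ (2*t) else 2 * u₂ (2*t-1))
      = ∫ t in Ioc (0:ℝ) (2*x), u₁ t := by
  rw [← integral_comp_half u₁ hx.1]
  refine setIntegral_congr_ae measurableSet_Ioc ?_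
  filter_upwards [ae_ne_half] with t ht hmem
  rw [if_pos (lt_of_le_of_ne (hmem.2.trans hx.2) ht)]

theorem glue_intOn_A (u₁ u₂ : ℝ → ℝ)
    (h₁ : IntegrableOn (fun t => 2 * u₁ (2*t)) (Ioc (0:ℝ) 2⁻¹) volume) :
    IntegrableOn (fun t => if t < (2⁻¹:ℝ) then 2 * u₁ (2*t) else 2 * u₂ (2*t-1))
      (Ioc (0:ℝ) 2⁻¹) volume := by
  refine h₁.congr ?_
  filter_upwards [ae_restrict_mem measurableSet_Ioc,
    ae_restrict_of_ae ae_ne_half] with t hmem hne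
  exact (if_pos (lt_of_le_of_ne hmem.2 hne)).symm

theorem prim_right (u₁ u₂ : ℝ → ℝ)
    (h₁ : IntegrableOn (fun t => 2 * u₁ (2*t)) (Ioc (0:ℝ) 2⁻¹) volume)
    (h₂ : IntegrableOn (fun t => 2 * u₂ (2*t - 1)) (Ioc (2⁻¹:ℝ) 1) volume)
    {x : ℝ} (hx : x ∈ Icc (2⁻¹:ℝ) 1) :
    ∫ t in Ioc (0:ℝ) x, (if t < 2⁻¹ then 2 * u₁ (2*t) else 2 * u₂ (2*t-1))
      = (∫ t in Ioc (0:ℝ) 1, u₁ t) + ∫ t in Ioc (0:ℝ) (2*x-1), u₂ t := by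
  have hEqOn : EqOn (fun t => if t < (2⁻¹:ℝ) then 2 * u₁ (2*t) else 2 * u₂ (2*t-1))
      (fun t => 2 * u₂ (2*t-1)) (Ioc (2⁻¹:ℝ) x) :=
    fun t ht => if_neg (not_lt.mpr (le_of_lt ht.1))
  have hunion : Ioc (0:ℝ) 2⁻¹ ∪ Ioc (2⁻¹:ℝ) x = Ioc (0:ℝ) x :=
    Ioc_union_Ioc_eq_Ioc (by norm_num) hx.1
  rw [← hunion, setIntegral_union (Ioc_disjoint_Ioc_of_le le_rfl) measurableSet_Ioc
    (glue_intOn_A u₁ u₂ h₁)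
    ((h₂.mono_set (Ioc_subset_Ioc_right hx.2)).congr (by
      filter_upwards [ae_restrict_mem measurableSet_Ioc] with t ht
      exact (hEqOn ht).symm))]
  rw [prim_left u₁ u₂ ⟨by norm_num, le_rfl⟩, setIntegral_congr_fun measurableSet_Ioc hEqOn,
    integral_comp_half' u₂ hx.1]
  norm_num

/-- The concatenation of two admissible pairs, rescaled to `(0,1)`. -/
noncomputable def gluePair (P₁ P₂ : H1Pair 1) : H1Pair 1 where
  a := fun x => ∫ t in Ioc (0:ℝ) x,
    (if t < 2⁻¹ then 2 * P₁.da (2*t) else 2 * P₂.da (2*t-1))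
  b := fun x => 1 + ∫ t in Ioc (0:ℝ) x,
    (if t < 2⁻¹ then 2 * P₁.db (2*t) else 2 * P₂.db (2*t-1))
  da := fun t => if t < 2⁻¹ then 2 * P₁.da (2*t) else 2 * P₂.da (2*t-1)
  db := fun t => if t < 2⁻¹ then 2 * P₁.db (2*t) else 2 * P₂.db (2*t-1)
  da_mem := glue_mem P₁.da_mem P₂.da_mem
  db_mem := glue_mem P₁.db_mem P₂.db_mem
  a_ftc := by intro x hx; simp [Set.Ioc_self]
  b_ftc := by intro x hx; simp [Set.Ioc_self]

theorem glue_a_left (P₁ P₂ : H1Pair 1) {x : ℝ} (hx : x ∈ Icc (0:ℝ) 2⁻¹) :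
    (gluePair P₁ P₂).a x = P₁.a (2*x) - P₁.a 0 := by
  show (∫ t in Ioc (0:ℝ) x, _) = _
  rw [prim_left _ _ hx, P₁.a_ftc (2*x) ⟨by linarith [hx.1], by
    have := hx.2; linarith⟩]
  ring

theorem glue_a_right (P₁ P₂ : H1Pair 1) {x : ℝ} (hx : x ∈ Icc (2⁻¹:ℝ) 1) :
    (gluePair P₁ P₂).a x = (P₁.a 1 - P₁.a 0) + (P₂.a (2*x-1) - P₂.a 0) := by
  show (∫ t in Ioc (0:ℝ) x, _) = _
  rw [prim_right _ _ (intOn_left P₁.da_mem) (intOn_right P₂.da_mem) hx,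
    P₁.a_ftc 1 ⟨by norm_num, le_rfl⟩,
    P₂.a_ftc (2*x-1) ⟨by have := hx.1; linarith, by have := hx.2; linarith⟩]
  ring

theorem glue_b_left (P₁ P₂ : H1Pair 1) {x : ℝ} (hx : x ∈ Icc (0:ℝ) 2⁻¹) :
    (gluePair P₁ P₂).b x = 1 + (P₁.b (2*x) - P₁.b 0) := by
  show (1 + ∫ t in Ioc (0:ℝ) x, _) = _
  rw [prim_left _ _ hx, P₁.b_ftc (2*x) ⟨by linarith [hx.1], by
    have := hx.2; linarith⟩]
  ring

theorem glue_b_right (P₁ P₂ : H1Pair 1) {x : ℝ} (hx : x ∈ Icc (2⁻¹:ℝ) 1) :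
    (gluePair P₁ P₂).b x = 1 + (P₁.b 1 - P₁.b 0) + (P₂.b (2*x-1) - P₂.b 0) := by
  show (1 + ∫ t in Ioc (0:ℝ) x, _) = _
  rw [prim_right _ _ (intOn_left P₁.db_mem) (intOn_right P₂.db_mem) hx,
    P₁.b_ftc 1 ⟨by norm_num, le_rfl⟩,
    P₂.b_ftc (2*x-1) ⟨by have := hx.1; linarith, by have := hx.2; linarith⟩]
  ring

theorem glue_adm {P₁ P₂ : H1Pair 1} {s₁ s₂ : ℝ}
    (h₁ : P₁.Admissible s₁) (h₂ : P₂.Admissible s₂) :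
    (gluePair P₁ P₂).Admissible (s₁ + s₂) := by
  obtain ⟨hb₁, ha₁0, ha₁1, hb₁0, hb₁1⟩ := h₁
  obtain ⟨hb₂, ha₂0, ha₂1, hb₂0, hb₂1⟩ := h₂
  refine ⟨?_, ?_, ?_, ?_, ?_⟩
  · intro t ht
    rcases le_or_gt t 2⁻¹ with h | h
    · rw [glue_b_left P₁ P₂ ⟨ht.1, h⟩, hb₁0]
      have := hb₁ (2*t) ⟨by linarith [ht.1], by linarith⟩
      simpa using this
    · rw [glue_b_right P₁ P₂ ⟨le_of_lt h, ht.2⟩, hb₁0, hb₁1, hb₂0]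
      have := hb₂ (2*t-1) ⟨by linarith, by linarith [ht.2]⟩
      simpa using this
  · rw [glue_a_left P₁ P₂ ⟨le_rfl, by norm_num⟩]
    simp
  · rw [glue_a_right P₁ P₂ ⟨by norm_num, le_rfl⟩, ha₁0, ha₁1]
    norm_num [ha₂0, ha₂1]
  · rw [glue_b_left P₁ P₂ ⟨le_rfl, by norm_num⟩]
    simp
  · rw [glue_b_right P₁ P₂ ⟨by norm_num, le_rfl⟩, hb₁0, hb₁1,
      show (2:ℝ)*1 - 1 = 1 by norm_num, hb₂0, hb₂1]
    ring

theorem key_sqrt (f : ℝ → ℝ) (l : ℝ) (b da db : ℝ) :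
    Real.sqrt ((DD f l b)^2 * (2*da)^2 + (1-b)^2 * (2*db)^2)
      = 2 * Real.sqrt ((DD f l b)^2 * da^2 + (1-b)^2 * db^2) := by
  rw [show (DD f l b)^2 * (2*da)^2 + (1-b)^2 * (2*db)^2
      = 2^2 * ((DD f l b)^2 * da^2 + (1-b)^2 * db^2) by ring,
    Real.sqrt_mul (by positivity), Real.sqrt_sq (by norm_num)]

theorem glue_energy (f : ℝ → ℝ) (l : ℝ) (hD : Continuous (DD f l))
    {P₁ P₂ : H1Pair 1} {s₁ s₂ : ℝ}
    (h₁ : P₁.Admissible s₁) (h₂ : P₂.Admissible s₂) :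
    surfEnergy f l (gluePair P₁ P₂) = surfEnergy f l P₁ + surfEnergy f l P₂ := by
  have hGadm := glue_adm h₁ h₂
  obtain ⟨hb₁, ha₁0, ha₁1, hb₁0, hb₁1⟩ := h₁
  obtain ⟨hb₂, ha₂0, ha₂1, hb₂0, hb₂1⟩ := h₂
  rw [surfEnergy_eq_nice f l _ hGadm.1, surfEnergy_eq_nice f l P₁ hb₁,
    surfEnergy_eq_nice f l P₂ hb₂]
  have hsplit : Ioo (0:ℝ) 1 = Ioo 0 2⁻¹ ∪ Ico 2⁻¹ 1 :=
    (Ioo_union_Ico_eq_Ioo (by norm_num) (by norm_num)).symm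
  have hdis : Disjoint (Ioo (0:ℝ) 2⁻¹) (Ico (2⁻¹:ℝ) 1) := by
    refine Set.disjoint_left.mpr fun t h1 h2 => absurd h2.1 (not_le.mpr h1.2)
  nth_rewrite 1 [hsplit]
  rw [lintegral_union measurableSet_Ico hdis]
  congr 1
  · -- left part
    have step1 : ∫⁻ t in Ioo (0:ℝ) 2⁻¹, nice f l (gluePair P₁ P₂) t
        = ∫⁻ t in Ioo (0:ℝ) 2⁻¹, ENNReal.ofReal 2 * nice f l P₁ (2*t) := by
      refine lintegral_congr_ae ?_
      filter_upwards [ae_restrict_mem measurableSet_Ioo] with t ht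
      have hb : (gluePair P₁ P₂).b t = P₁.b (2*t) := by
        rw [glue_b_left P₁ P₂ ⟨le_of_lt ht.1, le_of_lt ht.2⟩, hb₁0]; ring
      have hda : (gluePair P₁ P₂).da t = 2 * P₁.da (2*t) := by
        simp only [gluePair]; rw [if_pos ht.2]
      have hdb : (gluePair P₁ P₂).db t = 2 * P₁.db (2*t) := by
        simp only [gluePair]; rw [if_pos ht.2]
      rw [nice, hb, hda, hdb, key_sqrt,
        ENNReal.ofReal_mul (by norm_num : (0:ℝ) ≤ 2)]
      rfl
    rw [step1, lintegral_const_mul' _ _ ENNReal.ofReal_ne_top,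
      lintegral_comp_half (niceMeas f l hD P₁), ← mul_assoc,
      ← ENNReal.ofReal_mul (by norm_num : (0:ℝ) ≤ 2)]
    norm_num
  · -- right part
    rw [show volume.restrict (Ico (2⁻¹:ℝ) 1) = volume.restrict (Ioo (2⁻¹:ℝ) 1) from
      (Measure.restrict_congr_set Ioo_ae_eq_Ico).symm]
    have step1 : ∫⁻ t in Ioo (2⁻¹:ℝ) 1, nice f l (gluePair P₁ P₂) t
        = ∫⁻ t in Ioo (2⁻¹:ℝ) 1, ENNReal.ofReal 2 * nice f l P₂ (2*t - 1) := by
      refine lintegral_congr_ae ?_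
      filter_upwards [ae_restrict_mem measurableSet_Ioo] with t ht
      have hb : (gluePair P₁ P₂).b t = P₂.b (2*t - 1) := by
        rw [glue_b_right P₁ P₂ ⟨le_of_lt ht.1, le_of_lt ht.2⟩, hb₁0, hb₁1, hb₂0]; ring
      have hda : (gluePair P₁ P₂).da t = 2 * P₂.da (2*t - 1) := by
        simp only [gluePair]; rw [if_neg (not_lt.mpr (le_of_lt ht.1))]
      have hdb : (gluePair P₁ P₂).db t = 2 * P₂.db (2*t - 1) := by
        simp only [gluePair]; rw [if_neg (not_lt.mpr (le_of_lt ht.1))]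
      rw [nice, hb, hda, hdb, key_sqrt,
        ENNReal.ofReal_mul (by norm_num : (0:ℝ) ≤ 2)]
      rfl
    rw [step1, lintegral_const_mul' _ _ ENNReal.ofReal_ne_top,
      lintegral_comp_half' (niceMeas f l hD P₂), ← mul_assoc,
      ← ENNReal.ofReal_mul (by norm_num : (0:ℝ) ≤ 2)]
    norm_num

/-- The linear competitor `α(t) = s t`, `β ≡ 1`. -/
noncomputable def constPair (s : ℝ) : H1Pair 1 where
  a := fun t => s * t
  b := fun _ => 1
  da := fun _ => s
  db := fun _ => 0
  da_mem := memLp_const s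
  db_mem := memLp_const 0
  a_ftc := by
    intro x hx
    rw [setIntegral_const]
    simp [Real.volume_Ioc, ENNReal.toReal_ofReal hx.1, mul_comm, hx.1]
  b_ftc := by intro x hx; simp

theorem constPair_adm (s : ℝ) : (constPair s).Admissible s := by
  refine ⟨fun t _ => ⟨zero_le_one, le_rfl⟩, ?_, ?_, rfl, rfl⟩ <;> simp [constPair]

theorem constPair_energy (f : ℝ → ℝ) (l : ℝ) (s : ℝ) :
    surfEnergy f l (constPair s) = ENNReal.ofReal (Real.sqrt (l^2 * s^2)) := by
  rw [surfEnergy]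
  have : ∀ t : ℝ, ENNReal.ofReal (Real.sqrt ((damageExt f l ((constPair s).b t))^2
      * ((constPair s).da t)^2 + (1 - (constPair s).b t)^2 * ((constPair s).db t)^2))
      = ENNReal.ofReal (Real.sqrt (l^2 * s^2)) := by
    intro t
    simp [constPair, damageExt]
  simp only [this]
  rw [setLIntegral_const]
  simp [Real.volume_Ioo]

theorem surfDensity_zero_and_subadditive' (f : ℝ → ℝ) (l : ℝ)
    (hf : AdmissibleDamage f l) :
    surfDensity f l 0 = 0 ∧
    ∀ s₁ s₂ : ℝ, 0 ≤ s₁ → 0 ≤ s₂ →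
      surfDensity f l (s₁ + s₂) ≤ surfDensity f l s₁ + surfDensity f l s₂ := by
  have hD : Continuous (DD f l) := continuous_DD f l hf.1 hf.2.2.2.2.2
  set I : ℝ → ENNReal := fun s => ⨅ (P : H1Pair 1) (_ : P.Admissible s),
    surfEnergy f l P with hI
  have hIle : ∀ (s : ℝ) (P : H1Pair 1), P.Admissible s → I s ≤ surfEnergy f l P :=
    fun s P hP => iInf₂_le P hP
  have hfin : ∀ s : ℝ, I s ≠ ⊤ := by
    intro s
    refine ne_top_of_le_ne_top ?_ (hIle s (constPair s) (constPair_adm s))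
    rw [constPair_energy]
    exact ENNReal.ofReal_ne_top
  constructor
  · have hle : I 0 ≤ 0 := by
      have := hIle 0 (constPair 0) (constPair_adm 0)
      rwa [constPair_energy, show Real.sqrt (l^2 * 0^2) = 0 by norm_num,
        ENNReal.ofReal_zero] at this
    have : I 0 = 0 := le_antisymm hle (zero_le (a := I 0))
    rw [surfDensity, show (⨅ (P : H1Pair 1) (_ : P.Admissible (0:ℝ)), surfEnergy f l P) = I 0 from rfl, this, ENNReal.toReal_zero]
  · intro s₁ s₂ _ _
    have key : I (s₁ + s₂) ≤ I s₁ + I s₂ := by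
      have h1 : I s₁ = ⨅ p : {P : H1Pair 1 // P.Admissible s₁}, surfEnergy f l p.1 := by
        rw [hI]; exact iInf_subtype'
      have h2 : I s₂ = ⨅ p : {P : H1Pair 1 // P.Admissible s₂}, surfEnergy f l p.1 := by
        rw [hI]; exact iInf_subtype'
      rw [h1, h2, ENNReal.iInf_add]
      refine le_iInf fun p₁ => ?_
      rw [ENNReal.add_iInf]
      refine le_iInf fun p₂ => ?_
      calc I (s₁ + s₂) ≤ surfEnergy f l (gluePair p₁.1 p₂.1) :=
            hIle _ _ (glue_adm p₁.2 p₂.2)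
        _ = surfEnergy f l p₁.1 + surfEnergy f l p₂.1 := glue_energy f l hD p₁.2 p₂.2
    calc surfDensity f l (s₁ + s₂) = (I (s₁ + s₂)).toReal := rfl
      _ ≤ (I s₁ + I s₂).toReal :=
          ENNReal.toReal_mono (ENNReal.add_ne_top.mpr ⟨hfin s₁, hfin s₂⟩) key
      _ = surfDensity f l s₁ + surfDensity f l s₂ :=
          ENNReal.toReal_add (hfin s₁) (hfin s₂)


/-- The surface energy density `g` satisfies `g(0) = 0` and is
subadditive: `g(s₁ + s₂) ≤ g(s₁) + g(s₂)` for all `s₁, s₂ ≥ 0`. -/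
theorem surfDensity_zero_and_subadditive (f : ℝ → ℝ) (l : ℝ)
    (hf : AdmissibleDamage f l) :
    surfDensity f l 0 = 0 ∧
    ∀ s₁ s₂ : ℝ, 0 ≤ s₁ → 0 ≤ s₂ →
      surfDensity f l (s₁ + s₂) ≤ surfDensity f l s₁ + surfDensity f l s₂ := by
  exact surfDensity_zero_and_subadditive' f l hf
end

section
/- The surface energy density g is nondecreasing on [0,∞) and satisfies 0 ≤ g(s) ≤ min(1, ℓ s) for all s ≥ 0. -/
open MeasureTheory Set Filter Topology

private lemma intOnIoc {g : ℝ → ℝ} (hm : Measurable g) {C : ℝ} (hC : ∀ t, |g t| ≤ C)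
    (u v : ℝ) : MeasureTheory.IntegrableOn g (Set.Ioc u v) := by
  refine Measure.integrableOn_of_bounded (M := C) (by simp [Real.volume_Ioc]) hm.aestronglyMeasurable
    (Filter.Eventually.of_forall fun t => ?_)
  simpa [Real.norm_eq_abs] using hC t

private lemma memL2_of_bound {g : ℝ → ℝ} (hm : Measurable g) {C : ℝ} (hC : ∀ t, |g t| ≤ C) :
    MemLp g 2 (volume.restrict (Set.Ioo (0:ℝ) 1)) := by
  have : IsFiniteMeasure (volume.restrict (Set.Ioo (0:ℝ) 1)) :=
    ⟨by rw [Measure.restrict_apply_univ]; simp [Real.volume_Ioo]⟩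
  exact MemLp.of_bound hm.aestronglyMeasurable C
    (Filter.Eventually.of_forall fun t => by simpa [Real.norm_eq_abs] using hC t)

private lemma integral_step {g : ℝ → ℝ} {c u v : ℝ} (huv : u ≤ v)
    (h : ∀ t ∈ Set.Ioo u v, g t = c) :
    ∫ t in Set.Ioc u v, g t = c * (v - u) := by
  rw [integral_Ioc_eq_integral_Ioo, setIntegral_congr_fun measurableSet_Ioo h,
    setIntegral_const]
  simp [Real.volume_Ioo, ENNReal.toReal_ofReal (sub_nonneg.2 huv), mul_comm, huv]

/-! ### Competitor A: `β ≡ 1`, `α` linear. -/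

noncomputable def pairA (s : ℝ) : H1Pair 1 where
  a := fun t => s * t
  b := fun _ => 1
  da := fun _ => s
  db := fun _ => 0
  da_mem := memLp_const s
  db_mem := memLp_const 0
  a_ftc := by
    intro x hx
    rw [setIntegral_const]
    simp [Real.volume_Ioc, ENNReal.toReal_ofReal hx.1, mul_comm, hx.1]
  b_ftc := by intro x hx; simp

lemma pairA_adm (s : ℝ) : (pairA s).Admissible s := by
  refine ⟨fun t _ => by simp [pairA], by simp [pairA], by simp [pairA], rfl, rfl⟩

lemma energyA (f : ℝ → ℝ) {l : ℝ} (hl : 0 < l) {s : ℝ} (hs : 0 ≤ s) :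
    surfEnergy f l (pairA s) = ENNReal.ofReal (l * s) := by
  have h1 : Real.sqrt ((damageExt f l 1)^2 * s^2 + (1-(1:ℝ))^2*(0:ℝ)^2) = l * s := by
    rw [show damageExt f l 1 = l from if_pos rfl,
      show l^2*s^2 + (1-(1:ℝ))^2*(0:ℝ)^2 = (l*s)^2 by ring]
    exact Real.sqrt_sq (by positivity)
  unfold surfEnergy pairA
  simp only [h1, setLIntegral_const, Real.volume_Ioo]
  norm_num

/-! ### Competitor B: `β` dips to `0`, `α` moves while `β = 0`. -/

noncomputable def bB : ℝ → ℝ := fun t => max (1 - 3*t) (max (3*t - 2) 0)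
noncomputable def dbB : ℝ → ℝ := fun t => if t < 1/3 then -3 else if t < 2/3 then 0 else 3
noncomputable def aB (s : ℝ) : ℝ → ℝ := fun t => s * min 1 (max 0 (3*t - 1))
noncomputable def daB (s : ℝ) : ℝ → ℝ := fun t => if t ∈ Set.Ioo (1/3:ℝ) (2/3) then 3*s else 0

lemma dbB_meas : Measurable dbB := by
  unfold dbB
  exact Measurable.ite measurableSet_Iio measurable_const
    (Measurable.ite measurableSet_Iio measurable_const measurable_const)

lemma daB_meas (s : ℝ) : Measurable (daB s) := by
  unfold daB
  exact Measurable.ite measurableSet_Ioo measurable_const measurable_const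

lemma dbB_bound : ∀ t, |dbB t| ≤ 3 := by
  intro t; unfold dbB
  split_ifs <;> rw [abs_le] <;> constructor <;> norm_num

lemma daB_bound (s : ℝ) : ∀ t, |daB s t| ≤ 3 * |s| := by
  intro t; unfold daB
  split_ifs
  · rw [abs_mul]
    have h3 : |(3:ℝ)| = 3 := by norm_num
    rw [h3]
  · rw [abs_zero]; positivity

noncomputable def pairB (s : ℝ) : H1Pair 1 where
  a := aB s
  b := bB
  da := daB s
  db := dbB
  da_mem := memL2_of_bound (daB_meas s) (daB_bound s)
  db_mem := memL2_of_bound dbB_meas dbB_bound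
  a_ftc := by
    intro x hx
    have hint := intOnIoc (daB_meas s) (daB_bound s)
    have ha0 : aB s 0 = 0 := by norm_num [aB]
    have estep : ∀ u v : ℝ, u ≤ v → (∀ t ∈ Set.Ioo u v, t ∉ Set.Ioo (1/3:ℝ) (2/3)) →
        ∫ t in Set.Ioc u v, daB s t = 0 := by
      intro u v huv h
      have e : ∫ t in Set.Ioc u v, daB s t = 0 * (v - u) :=
        integral_step huv (fun t ht => by unfold daB; exact if_neg (h t ht))
      rw [e]; ring
    rcases le_or_gt x (1/3) with h1 | h1
    · have e1 : ∫ t in Set.Ioc (0:ℝ) x, daB s t = 0 :=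
        estep 0 x hx.1 (fun t ht hm => absurd hm.1 (not_lt.2 (le_trans ht.2.le h1)))
      have e2 : aB s x = 0 := by
        have : max 0 (3*x - 1) = 0 := max_eq_left (by linarith)
        simp [aB, this]
      rw [e1, e2, ha0]; ring
    · have hmid : ∀ v : ℝ, 1/3 ≤ v → v ≤ 2/3 → ∫ t in Set.Ioc (1/3:ℝ) v, daB s t = 3*s*(v - 1/3) := by
        intro v hv1 hv2
        apply integral_step hv1
        intro t ht
        unfold daB
        exact if_pos ⟨ht.1, lt_of_lt_of_le ht.2 hv2⟩
      have e0 : ∫ t in Set.Ioc (0:ℝ) (1/3), daB s t = 0 :=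
        estep 0 (1/3) (by norm_num) (fun t ht hm => absurd hm.1 (not_lt.2 ht.2.le))
      rcases le_or_gt x (2/3) with h2 | h2
      · rw [show Set.Ioc (0:ℝ) x = Set.Ioc 0 (1/3) ∪ Set.Ioc (1/3) x from
          (Set.Ioc_union_Ioc_eq_Ioc (by norm_num) h1.le).symm,
          setIntegral_union (Set.Ioc_disjoint_Ioc_of_le le_rfl) measurableSet_Ioc (hint 0 (1/3)) (hint (1/3) x),
          e0, hmid x h1.le h2]
        have e2 : aB s x = s * (3*x - 1) := by
          have h3 : max 0 (3*x - 1) = 3*x - 1 := max_eq_right (by linarith)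
          have h4 : min 1 (3*x - 1) = 3*x - 1 := min_eq_right (by linarith)
          simp [aB, h3, h4]
        rw [e2, ha0]; ring
      · have e3 : ∫ t in Set.Ioc (2/3:ℝ) x, daB s t = 0 :=
          estep (2/3) x h2.le (fun t ht hm => absurd hm.2 (not_lt.2 ht.1.le))
        rw [show Set.Ioc (0:ℝ) x = Set.Ioc 0 (2/3) ∪ Set.Ioc (2/3) x from
          (Set.Ioc_union_Ioc_eq_Ioc (by norm_num) h2.le).symm,
          setIntegral_union (Set.Ioc_disjoint_Ioc_of_le le_rfl) measurableSet_Ioc (hint 0 (2/3)) (hint (2/3) x),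
          show Set.Ioc (0:ℝ) (2/3) = Set.Ioc 0 (1/3) ∪ Set.Ioc (1/3) (2/3) from
          (Set.Ioc_union_Ioc_eq_Ioc (by norm_num) (by norm_num)).symm,
          setIntegral_union (Set.Ioc_disjoint_Ioc_of_le le_rfl) measurableSet_Ioc (hint 0 (1/3)) (hint (1/3) (2/3)),
          e0, hmid (2/3) (by norm_num) le_rfl, e3]
        have e2 : aB s x = s := by
          have h3 : max 0 (3*x - 1) = 3*x - 1 := max_eq_right (by linarith)
          have h4 : min 1 (3*x - 1) = 1 := min_eq_left (by linarith)
          simp [aB, h3, h4]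
        rw [e2, ha0]; ring
  b_ftc := by
    intro x hx
    have hint := intOnIoc dbB_meas dbB_bound
    have hb0 : bB 0 = 1 := by norm_num [bB]
    have edown : ∀ v : ℝ, 0 ≤ v → v ≤ 1/3 → ∫ t in Set.Ioc (0:ℝ) v, dbB t = -3*(v - 0) := by
      intro v hv0 hv1
      apply integral_step hv0
      intro t ht
      unfold dbB
      exact if_pos (lt_of_lt_of_le ht.2 hv1)
    have emid : ∀ v : ℝ, 1/3 ≤ v → v ≤ 2/3 → ∫ t in Set.Ioc (1/3:ℝ) v, dbB t = 0 := by
      intro v hv1 hv2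
      have : ∫ t in Set.Ioc (1/3:ℝ) v, dbB t = 0 * (v - 1/3) := by
        apply integral_step hv1
        intro t ht
        unfold dbB
        rw [if_neg (not_lt.2 ht.1.le), if_pos (lt_of_lt_of_le ht.2 hv2)]
      rw [this]; ring
    rcases le_or_gt x (1/3) with h1 | h1
    · rw [edown x hx.1 h1]
      have e2 : bB x = 1 - 3*x := by
        have h3 : max (3*x - 2) 0 = 0 := max_eq_right (by linarith)
        have h4 : max (1 - 3*x) 0 = 1 - 3*x := max_eq_left (by linarith)
        simp [bB, h3, h4]
      rw [e2, hb0]; ring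
    · rcases le_or_gt x (2/3) with h2 | h2
      · rw [show Set.Ioc (0:ℝ) x = Set.Ioc 0 (1/3) ∪ Set.Ioc (1/3) x from
          (Set.Ioc_union_Ioc_eq_Ioc (by norm_num) h1.le).symm,
          setIntegral_union (Set.Ioc_disjoint_Ioc_of_le le_rfl) measurableSet_Ioc (hint 0 (1/3)) (hint (1/3) x),
          edown (1/3) (by norm_num) le_rfl, emid x h1.le h2]
        have e2 : bB x = 0 := by
          have h3 : max (3*x - 2) 0 = 0 := max_eq_right (by linarith)
          have h4 : max (1 - 3*x) 0 = 0 := max_eq_right (by linarith)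
          simp [bB, h3, h4]
        rw [e2, hb0]; ring
      · have e3 : ∫ t in Set.Ioc (2/3:ℝ) x, dbB t = 3*(x - 2/3) := by
          apply integral_step h2.le
          intro t ht
          unfold dbB
          rw [if_neg (by push_neg; linarith [ht.1]), if_neg (not_lt.2 ht.1.le)]
        rw [show Set.Ioc (0:ℝ) x = Set.Ioc 0 (2/3) ∪ Set.Ioc (2/3) x from
          (Set.Ioc_union_Ioc_eq_Ioc (by norm_num) h2.le).symm,
          setIntegral_union (Set.Ioc_disjoint_Ioc_of_le le_rfl) measurableSet_Ioc (hint 0 (2/3)) (hint (2/3) x),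
          show Set.Ioc (0:ℝ) (2/3) = Set.Ioc 0 (1/3) ∪ Set.Ioc (1/3) (2/3) from
          (Set.Ioc_union_Ioc_eq_Ioc (by norm_num) (by norm_num)).symm,
          setIntegral_union (Set.Ioc_disjoint_Ioc_of_le le_rfl) measurableSet_Ioc (hint 0 (1/3)) (hint (1/3) (2/3)),
          edown (1/3) (by norm_num) le_rfl, emid (2/3) (by norm_num) le_rfl, e3]
        have e2 : bB x = 3*x - 2 := by
          have h3 : max (3*x - 2) 0 = 3*x - 2 := max_eq_left (by linarith)
          have h4 : max (1 - 3*x) (3*x - 2) = 3*x - 2 := max_eq_right (by linarith)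
          simp [bB, h3, h4]
        rw [e2, hb0]; ring

lemma pairB_adm (s : ℝ) : (pairB s).Admissible s := by
  refine ⟨fun t ht => ?_, by norm_num [pairB, aB], by norm_num [pairB, aB],
    by norm_num [pairB, bB], by norm_num [pairB, bB]⟩
  obtain ⟨ht0, ht1⟩ := ht
  show bB t ∈ Set.Icc (0:ℝ) 1
  constructor
  · exact le_trans (le_max_right _ _) (le_max_right _ _)
  · exact max_le (by linarith) (max_le (by linarith) zero_le_one)

lemma energyB (f : ℝ → ℝ) (l : ℝ) (hf0 : f 0 = 0) (s : ℝ) :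
    surfEnergy f l (pairB s) = ENNReal.ofReal 1 := by
  have hF : surfEnergy f l (pairB s) = ∫⁻ t in Set.Ioo (0:ℝ) 1,
      ENNReal.ofReal (Real.sqrt ((damageExt f l (bB t))^2 * (daB s t)^2
        + (1 - bB t)^2 * (dbB t)^2)) := rfl
  set F : ℝ → ENNReal := fun t => ENNReal.ofReal (Real.sqrt ((damageExt f l (bB t))^2 * (daB s t)^2
        + (1 - bB t)^2 * (dbB t)^2)) with hFdef
  rw [hF]
  have hsplit : Set.Ioo (0:ℝ) 1 = Set.Ioc 0 (1/3) ∪ (Set.Ioc (1/3) (2/3) ∪ Set.Ioo (2/3) 1) := by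
    rw [Set.Ioc_union_Ioo_eq_Ioo (by norm_num : (1/3:ℝ) ≤ 2/3) (by norm_num : (2/3:ℝ) < 1),
      Set.Ioc_union_Ioo_eq_Ioo (by norm_num : (0:ℝ) ≤ 1/3) (by norm_num : (1/3:ℝ) < 1)]
  have d1 : Disjoint (Set.Ioc (0:ℝ) (1/3)) (Set.Ioc (1/3) (2/3) ∪ Set.Ioo (2/3) 1) := by
    rw [Set.disjoint_left]
    rintro t ⟨_, h2⟩ (⟨h3, _⟩ | ⟨h3, _⟩) <;> linarith
  have d2 : Disjoint (Set.Ioc (1/3:ℝ) (2/3)) (Set.Ioo (2/3:ℝ) 1) := by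
    rw [Set.disjoint_left]
    rintro t ⟨_, h2⟩ ⟨h3, _⟩; linarith
  rw [hsplit, lintegral_union (measurableSet_Ioc.union measurableSet_Ioo) d1,
    lintegral_union measurableSet_Ioo d2]
  -- Piece 1
  have p1 : ∫⁻ t in Set.Ioc (0:ℝ) (1/3), F t = ENNReal.ofReal (1/2) := by
    rw [← setLIntegral_congr (Ioo_ae_eq_Ioc (a := (0:ℝ)) (b := 1/3))]
    have hcongr : ∀ t ∈ Set.Ioo (0:ℝ) (1/3), F t = ENNReal.ofReal (9 * t) := by
      intro t ht
      obtain ⟨ht0, ht1⟩ := ht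
      have hda : daB s t = 0 := by
        unfold daB; exact if_neg (by simp only [Set.mem_Ioo, not_and_or, not_lt]; exact Or.inl ht1.le)
      have hdb : dbB t = -3 := by unfold dbB; exact if_pos ht1
      have hb : bB t = 1 - 3*t := by
        have h3 : max (3*t - 2) 0 = 0 := max_eq_right (by linarith)
        have h4 : max (1 - 3*t) 0 = 1 - 3*t := max_eq_left (by linarith)
        simp [bB, h3, h4]
      rw [hFdef]
      simp only [hda, hdb, hb]
      rw [show (damageExt f l (1 - 3*t))^2 * (0:ℝ)^2 + (1 - (1 - 3*t))^2 * (-3:ℝ)^2 = (9*t)^2 by ring,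
        Real.sqrt_sq (by linarith)]
    rw [setLIntegral_congr_fun measurableSet_Ioo hcongr]
    rw [← ofReal_integral_eq_lintegral_ofReal]
    · rw [← integral_Ioc_eq_integral_Ioo, ← intervalIntegral.integral_of_le (by norm_num : (0:ℝ) ≤ 1/3)]
      have e : (∫ x in (0:ℝ)..(1/3), 9*x) = 1/2 := by
        rw [intervalIntegral.integral_const_mul, _root_.integral_id]; norm_num
      rw [e]
    · refine Measure.integrableOn_of_bounded (M := 3) (by simp [Real.volume_Ioo]) ?_ ?_
      · exact (measurable_const.mul measurable_id).aestronglyMeasurable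
      · rw [ae_restrict_iff' measurableSet_Ioo]
        refine Filter.Eventually.of_forall fun t ht => ?_
        rw [Real.norm_eq_abs, abs_of_nonneg (by linarith [ht.1])]
        linarith [ht.2]
    · exact (ae_restrict_iff' measurableSet_Ioo).2
        (Filter.Eventually.of_forall fun t ht => by simp; linarith [ht.1])
  -- Piece 2
  have p2 : ∫⁻ t in Set.Ioc (1/3:ℝ) (2/3), F t = 0 := by
    rw [← setLIntegral_congr (Ioo_ae_eq_Ioc (a := (1/3:ℝ)) (b := 2/3))]
    have hcongr : ∀ t ∈ Set.Ioo (1/3:ℝ) (2/3), F t = 0 := by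
      intro t ht
      obtain ⟨ht0, ht1⟩ := ht
      have hdb : dbB t = 0 := by unfold dbB; rw [if_neg (not_lt.2 ht0.le), if_pos ht1]
      have hb : bB t = 0 := by
        have h3 : max (3*t - 2) 0 = 0 := max_eq_right (by linarith)
        have h4 : max (1 - 3*t) 0 = 0 := max_eq_right (by linarith)
        simp [bB, h3, h4]
      have hD : damageExt f l 0 = 0 := by
        unfold damageExt; rw [if_neg (by norm_num), hf0]; ring
      rw [hFdef]
      simp only [hb, hdb, hD]
      norm_num
    rw [setLIntegral_congr_fun measurableSet_Ioo hcongr]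
    simp
  -- Piece 3
  have p3 : ∫⁻ t in Set.Ioo (2/3:ℝ) 1, F t = ENNReal.ofReal (1/2) := by
    have hcongr : ∀ t ∈ Set.Ioo (2/3:ℝ) 1, F t = ENNReal.ofReal (9 - 9*t) := by
      intro t ht
      obtain ⟨ht0, ht1⟩ := ht
      have hda : daB s t = 0 := by
        unfold daB; exact if_neg (by simp only [Set.mem_Ioo, not_and_or, not_lt]; exact Or.inr ht0.le)
      have hdb : dbB t = 3 := by
        unfold dbB; rw [if_neg (by push_neg; linarith), if_neg (not_lt.2 ht0.le)]
      have hb : bB t = 3*t - 2 := by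
        have h3 : max (3*t - 2) 0 = 3*t - 2 := max_eq_left (by linarith)
        have h4 : max (1 - 3*t) (3*t - 2) = 3*t - 2 := max_eq_right (by linarith)
        simp [bB, h3, h4]
      rw [hFdef]
      simp only [hda, hdb, hb]
      rw [show (damageExt f l (3*t - 2))^2 * (0:ℝ)^2 + (1 - (3*t - 2))^2 * (3:ℝ)^2 = (9 - 9*t)^2 by ring,
        Real.sqrt_sq (by linarith)]
    rw [setLIntegral_congr_fun measurableSet_Ioo hcongr]
    rw [← ofReal_integral_eq_lintegral_ofReal]
    · rw [← integral_Ioc_eq_integral_Ioo, ← intervalIntegral.integral_of_le (by norm_num : (2/3:ℝ) ≤ 1)]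
      have e : (∫ x in (2/3:ℝ)..1, (9 - 9*x)) = 1/2 := by
        rw [intervalIntegral.integral_sub intervalIntegrable_const
          (((continuous_mul_left (9:ℝ))).intervalIntegrable _ _),
          intervalIntegral.integral_const, intervalIntegral.integral_const_mul,
          _root_.integral_id]
        norm_num
      rw [e]
    · refine Measure.integrableOn_of_bounded (M := 3) (by simp [Real.volume_Ioo]) ?_ ?_
      · exact (continuous_const.sub (continuous_const.mul continuous_id)).measurable.aestronglyMeasurable
      · rw [ae_restrict_iff' measurableSet_Ioo]
        refine Filter.Eventually.of_forall fun t ht => ?_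
        rw [Real.norm_eq_abs, abs_of_nonneg (by linarith [ht.2])]
        linarith [ht.1]
    · exact (ae_restrict_iff' measurableSet_Ioo).2
        (Filter.Eventually.of_forall fun t ht => by simp; linarith [ht.2])
  rw [p1, p2, p3, zero_add, ← ENNReal.ofReal_add (by norm_num) (by norm_num)]
  norm_num

/-! ### Scaling a pair. -/

noncomputable def scaleP (c : ℝ) (P : H1Pair 1) : H1Pair 1 where
  a := fun t => c * P.a t
  b := P.b
  da := fun t => c * P.da t
  db := P.db
  da_mem := P.da_mem.const_mul c
  db_mem := P.db_mem
  a_ftc := by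
    intro x hx
    simp only [MeasureTheory.integral_const_mul]
    rw [P.a_ftc x hx]
    ring
  b_ftc := P.b_ftc

lemma scaleP_adm {c s : ℝ} {P : H1Pair 1} (hP : P.Admissible s) :
    (scaleP c P).Admissible (c * s) := by
  obtain ⟨h1, h2, h3, h4, h5⟩ := hP
  exact ⟨h1, by show c * P.a 0 = 0; rw [h2]; ring, by show c * P.a 1 = c * s; rw [h3], h4, h5⟩

lemma scaleP_energy (f : ℝ → ℝ) (l : ℝ) {c : ℝ} (hc0 : 0 ≤ c) (hc1 : c ≤ 1) (P : H1Pair 1) :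
    surfEnergy f l (scaleP c P) ≤ surfEnergy f l P := by
  unfold surfEnergy
  apply lintegral_mono
  intro t
  apply ENNReal.ofReal_le_ofReal
  apply Real.sqrt_le_sqrt
  have hda : (scaleP c P).da t = c * P.da t := rfl
  have hb : (scaleP c P).b t = P.b t := rfl
  have hdb : (scaleP c P).db t = P.db t := rfl
  rw [hda, hb, hdb]
  have hc2 : c^2 ≤ 1 := by nlinarith
  nlinarith [mul_nonneg (sq_nonneg (damageExt f l (P.b t))) (sq_nonneg (P.da t))]

/-! ### Main theorem. -/


/-- The surface energy density `g` is nondecreasing on `[0,∞)` and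
satisfies `0 ≤ g(s) ≤ min(1, ℓ s)` for all `s ≥ 0`. -/
theorem surfDensity_monotone_and_bounds (f : ℝ → ℝ) (l : ℝ)
    (hf : AdmissibleDamage f l) :
    MonotoneOn (surfDensity f l) (Set.Ici 0) ∧
    ∀ s : ℝ, 0 ≤ s → 0 ≤ surfDensity f l s ∧ surfDensity f l s ≤ min 1 (l * s) := by
  obtain ⟨-, -, -, hf0', hl, -⟩ := hf
  have hf0 : f 0 = 0 := (hf0' 0 ⟨le_rfl, one_pos⟩).mpr rfl
  set G : ℝ → ENNReal := fun s => ⨅ (P : H1Pair 1) (_ : P.Admissible s), surfEnergy f l P with hG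
  have hGdef : ∀ s, surfDensity f l s = (G s).toReal := fun s => rfl
  have hG1 : ∀ s : ℝ, G s ≤ ENNReal.ofReal 1 := by
    intro s
    calc G s ≤ surfEnergy f l (pairB s) := iInf₂_le (pairB s) (pairB_adm s)
    _ = ENNReal.ofReal 1 := energyB f l hf0 s
  have hGtop : ∀ s : ℝ, G s ≠ ⊤ :=
    fun s => ((hG1 s).trans_lt ENNReal.ofReal_lt_top).ne
  have hGls : ∀ s : ℝ, 0 ≤ s → G s ≤ ENNReal.ofReal (l * s) := by
    intro s hs
    calc G s ≤ surfEnergy f l (pairA s) := iInf₂_le (pairA s) (pairA_adm s)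
    _ = ENNReal.ofReal (l * s) := energyA f hl hs
  have hmono : ∀ s₁ s₂ : ℝ, 0 ≤ s₁ → s₁ ≤ s₂ → G s₁ ≤ G s₂ := by
    intro s₁ s₂ hs1 h12
    rcases eq_or_lt_of_le (hs1.trans h12) with hs2 | hs2
    · have : s₁ = s₂ := le_antisymm h12 (hs2 ▸ hs1)
      rw [this]
    · set c := s₁ / s₂ with hc
      have hc0 : 0 ≤ c := div_nonneg hs1 hs2.le
      have hc1 : c ≤ 1 := (div_le_one hs2).2 h12
      refine le_iInf₂ fun P hP => ?_
      have hadm : (scaleP c P).Admissible s₁ := by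
        have := scaleP_adm (c := c) hP
        rwa [div_mul_cancel₀ _ hs2.ne'] at this
      calc G s₁ ≤ surfEnergy f l (scaleP c P) := iInf₂_le (scaleP c P) hadm
      _ ≤ surfEnergy f l P := scaleP_energy f l hc0 hc1 P
  constructor
  · intro s₁ hs1 s₂ _ h12
    rw [hGdef, hGdef]
    exact ENNReal.toReal_mono (hGtop s₂) (hmono s₁ s₂ hs1 h12)
  · intro s hs
    refine ⟨ENNReal.toReal_nonneg, le_min ?_ ?_⟩
    · exact ENNReal.toReal_le_of_le_ofReal zero_le_one (hG1 s)
    · exact ENNReal.toReal_le_of_le_ofReal (mul_nonneg hl.le hs) (hGls s hs)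
end

section
/- The surface energy density g satisfies lim_{s→∞} g(s) = 1. -/
open MeasureTheory Set Filter Topology
open scoped ENNReal BigOperators

section Aux

instance : IsFiniteMeasure (volume.restrict (Set.Ioo (0:ℝ) 1)) :=
  ⟨by simp [Real.volume_Ioo]⟩

lemma intOn_da (P : H1Pair 1) : IntegrableOn P.da (Ioo (0:ℝ) 1) volume :=
  P.da_mem.integrable (by norm_num)

lemma intOn_db (P : H1Pair 1) : IntegrableOn P.db (Ioo (0:ℝ) 1) volume :=
  P.db_mem.integrable (by norm_num)

lemma intOn_db_Icc (P : H1Pair 1) : IntegrableOn P.db (Icc (0:ℝ) 1) volume :=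
  (intOn_db P).congr_set_ae Ioo_ae_eq_Icc.symm

lemma b_contOn (P : H1Pair 1) : ContinuousOn P.b (Icc (0:ℝ) 1) := by
  have h := intervalIntegral.continuousOn_primitive (μ := volume) (f := P.db)
    (a := (0:ℝ)) (b := 1) (intOn_db_Icc P)
  have : ContinuousOn (fun x => P.b 0 + ∫ t in Ioc (0:ℝ) x, P.db t) (Icc (0:ℝ) 1) :=
    continuousOn_const.add h
  exact this.congr (fun x hx => P.b_ftc x hx)

lemma integral_db_Ioc (P : H1Pair 1) {x y : ℝ} (hx : 0 ≤ x) (hxy : x ≤ y) (hy : y ≤ 1) :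
    ∫ t in Ioc x y, P.db t = P.b y - P.b x := by
  have h1 := P.b_ftc x ⟨hx, hxy.trans hy⟩
  have h2 := P.b_ftc y ⟨hx.trans hxy, hy⟩
  have hsplit : ∫ t in Ioc (0:ℝ) y, P.db t
      = (∫ t in Ioc (0:ℝ) x, P.db t) + ∫ t in Ioc x y, P.db t := by
    rw [← MeasureTheory.setIntegral_union ((Set.Ioc_disjoint_Ioc_of_le le_rfl)) measurableSet_Ioc
      ((intOn_db_Icc P).mono_set (Ioc_subset_Icc_self.trans (Icc_subset_Icc le_rfl (hxy.trans hy))))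
      ((intOn_db_Icc P).mono_set ((Set.Ioc_subset_Icc_self).trans (Icc_subset_Icc hx hy)))]
    rw [Set.Ioc_union_Ioc_eq_Ioc hx hxy]
  rw [h1, h2, hsplit]; ring

end Aux

section Lower

lemma interval_bound (f : ℝ → ℝ) (l : ℝ) (P : H1Pair 1) {x y lam : ℝ}
    (hx : 0 ≤ x) (hxy : x ≤ y) (hy : y ≤ 1) (hlam : lam ≤ 1)
    (hb : ∀ t ∈ Ioo x y, P.b t ≤ lam) :
    ENNReal.ofReal ((1 - lam) * |P.b y - P.b x|) ≤
      ∫⁻ t in Ioo x y, ENNReal.ofReal (Real.sqrt ((damageExt f l (P.b t))^2 * (P.da t)^2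
        + (1 - P.b t)^2 * (P.db t)^2)) := by
  have hint : IntegrableOn P.db (Ioo x y) volume :=
    (intOn_db_Icc P).mono_set ((Ioo_subset_Icc_self).trans (Icc_subset_Icc hx hy))
  -- step 1: pointwise bound
  have step1 : ∫⁻ t in Ioo x y, ENNReal.ofReal ((1 - lam) * |P.db t|)
      ≤ ∫⁻ t in Ioo x y, ENNReal.ofReal (Real.sqrt ((damageExt f l (P.b t))^2 * (P.da t)^2
        + (1 - P.b t)^2 * (P.db t)^2)) := by
    apply MeasureTheory.lintegral_mono_ae
    rw [MeasureTheory.ae_restrict_iff' measurableSet_Ioo]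
    filter_upwards with t ht
    apply ENNReal.ofReal_le_ofReal
    have h1 : (1 - lam) * |P.db t| ≤ (1 - P.b t) * |P.db t| := by
      apply mul_le_mul_of_nonneg_right _ (abs_nonneg _)
      linarith [hb t ht]
    refine h1.trans ?_
    have h2 : (1 - P.b t) * |P.db t| = Real.sqrt ((1 - P.b t)^2 * (P.db t)^2) := by
      rw [← mul_pow, Real.sqrt_sq_eq_abs, abs_mul, abs_of_nonneg (by linarith [hb t ht, hlam] : (0:ℝ) ≤ 1 - P.b t)]
    rw [h2]
    apply Real.sqrt_le_sqrt
    nlinarith [sq_nonneg (damageExt f l (P.b t) * P.da t), mul_pow (damageExt f l (P.b t)) (P.da t) 2]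
  refine le_trans ?_ step1
  -- step 2
  have habs : ∫⁻ t in Ioo x y, ENNReal.ofReal ((1 - lam) * |P.db t|)
      = ENNReal.ofReal (∫ t in Ioo x y, (1 - lam) * |P.db t|) := by
    rw [MeasureTheory.ofReal_integral_eq_lintegral_ofReal]
    · exact (hint.abs.const_mul _)
    · filter_upwards with t
      exact mul_nonneg (by linarith) (abs_nonneg _)
  rw [habs]
  apply ENNReal.ofReal_le_ofReal
  rw [MeasureTheory.integral_const_mul]
  apply mul_le_mul_of_nonneg_left _ (by linarith)
  have h3 : |P.b y - P.b x| = |∫ t in Ioo x y, P.db t| := by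
    rw [← MeasureTheory.integral_Ioc_eq_integral_Ioo, integral_db_Ioc P hx hxy hy]
  rw [h3]
  simpa [Real.norm_eq_abs] using
    MeasureTheory.norm_integral_le_integral_norm (μ := volume.restrict (Ioo x y)) P.db

lemma chain_le (v : ℕ → ℝ) : ∀ n, (∀ i < n, v i ≤ v (i+1)) → v 0 ≤ v n := by
  intro n
  induction n with
  | zero => intro _; exact le_refl _
  | succ m ihm =>
    intro h
    exact le_trans (ihm (fun i hi => h i (Nat.lt_succ_of_lt hi))) (h m (Nat.lt_succ_self m))

lemma chain_sum (F : ℝ → ℝ≥0∞) (v : ℕ → ℝ) (n : ℕ) (hmono : ∀ i < n, v i ≤ v (i+1)) :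
    ∑ i ∈ Finset.range n, (∫⁻ t in Ioo (v i) (v (i+1)), F t)
      ≤ ∫⁻ t in Ioo (v 0) (v n), F t := by
  induction n with
  | zero => simp
  | succ n ih =>
    have hm : ∀ i < n, v i ≤ v (i+1) := fun i hi => hmono i (Nat.lt_succ_of_lt hi)
    have h0n : v 0 ≤ v n := chain_le v n hm
    rw [Finset.sum_range_succ]
    have hdisj : Disjoint (Ioo (v 0) (v n)) (Ioo (v n) (v (n+1))) := by
      rw [Set.disjoint_left]
      rintro t ⟨_, h1⟩ ⟨h2, _⟩
      exact absurd h2 (not_lt.2 h1.le)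
    calc (∑ i ∈ Finset.range n, (∫⁻ t in Ioo (v i) (v (i+1)), F t))
          + ∫⁻ t in Ioo (v n) (v (n+1)), F t
        ≤ (∫⁻ t in Ioo (v 0) (v n), F t) + ∫⁻ t in Ioo (v n) (v (n+1)), F t :=
          add_le_add_left (ih hm) _
      _ = ∫⁻ t in Ioo (v 0) (v n) ∪ Ioo (v n) (v (n+1)), F t :=
          (MeasureTheory.lintegral_union measurableSet_Ioo hdisj).symm
      _ ≤ ∫⁻ t in Ioo (v 0) (v (n+1)), F t := by
          apply MeasureTheory.lintegral_mono_set
          rintro t (⟨h1, h2⟩ | ⟨h1, h2⟩)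
          · exact ⟨h1, h2.trans_le (hmono n (Nat.lt_succ_self n))⟩
          · exact ⟨h0n.trans_lt h1, h2⟩

noncomputable def igd (f : ℝ → ℝ) (l : ℝ) (P : H1Pair 1) (t : ℝ) : ℝ≥0∞ :=
  ENNReal.ofReal (Real.sqrt ((damageExt f l (P.b t))^2 * (P.da t)^2
    + (1 - P.b t)^2 * (P.db t)^2))

lemma surfEnergy_eq (f : ℝ → ℝ) (l : ℝ) (P : H1Pair 1) :
    surfEnergy f l P = ∫⁻ t in Ioo (0:ℝ) 1, igd f l P t := rfl

lemma sum_range_real (n : ℕ) : ∑ i ∈ Finset.range n, (i:ℝ) = n*(n-1)/2 := by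
  induction n with
  | zero => simp
  | succ m ih => rw [Finset.sum_range_succ, ih]; push_cast; ring

lemma left_sum (f : ℝ → ℝ) (l : ℝ) (P : H1Pair 1) {tstar δ : ℝ} (n : ℕ) (hn : 0 < n)
    (htmem : tstar ∈ Icc (0:ℝ) 1) (hbt : P.b tstar ≤ δ) (hδ1 : δ < 1) (hb0 : P.b 0 = 1) :
    ENNReal.ofReal (((n:ℝ)*(n-1)/2) * ((1-δ)/n)^2) ≤ ∫⁻ t in Ioo (0:ℝ) tstar, igd f l P t := by
  set h := (1-δ)/(n:ℝ) with hh
  have hnpos : (0:ℝ) < n := Nat.cast_pos.2 hn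
  have hhpos : 0 < h := div_pos (by linarith) hnpos
  have hnh : (n:ℝ)*h = 1-δ := by rw [hh]; field_simp
  set lam : ℕ → ℝ := fun i => 1 - i*h with hlam
  have hlam_le : ∀ i : ℕ, i ≤ n → δ ≤ lam i := by
    intro i hi
    have h1 : (i:ℝ) ≤ n := Nat.cast_le.2 hi
    have h2 : (i:ℝ)*h ≤ n*h := by nlinarith
    simp only [hlam]; nlinarith
  have hlam1 : ∀ i : ℕ, lam i ≤ 1 := by
    intro i
    have := mul_nonneg (Nat.cast_nonneg (α := ℝ) i) hhpos.le
    simp only [hlam]; linarith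
  have ht0 : 0 ≤ tstar := htmem.1
  have h01 : tstar ≤ 1 := htmem.2
  have hcont' : ContinuousOn P.b (Icc 0 tstar) := (b_contOn P).mono (Icc_subset_Icc le_rfl h01)
  set S : ℕ → Set ℝ := fun i => {t ∈ Icc 0 tstar | P.b t = lam i} with hS
  have hSclosed : ∀ i, IsClosed (S i) := by
    intro i
    have heq : S i = Icc 0 tstar ∩ P.b ⁻¹' {lam i} := by
      ext t; simp only [hS, Set.mem_setOf_eq, Set.mem_inter_iff, Set.mem_preimage,
        Set.mem_singleton_iff]
    rw [heq]
    exact hcont'.preimage_isClosed_of_isClosed isClosed_Icc isClosed_singleton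
  have hSne : ∀ i, i ≤ n → (S i).Nonempty := by
    intro i hi
    have hmem : lam i ∈ Icc (P.b tstar) (P.b 0) := ⟨le_trans hbt (hlam_le i hi), by rw [hb0]; exact hlam1 i⟩
    obtain ⟨t, ht, hbtv⟩ := intermediate_value_Icc' ht0 hcont' hmem
    exact ⟨t, ht, hbtv⟩
  have hSbdd : ∀ i, BddAbove (S i) := fun i => (bddAbove_Icc).mono (fun t ht => ht.1)
  set v : ℕ → ℝ := fun i => sSup (S i) with hv
  have hvmem : ∀ i, i ≤ n → v i ∈ S i := fun i hi => (hSclosed i).csSup_mem (hSne i hi) (hSbdd i)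
  have hvIcc : ∀ i, i ≤ n → v i ∈ Icc 0 tstar := fun i hi => (hvmem i hi).1
  have hvb : ∀ i, i ≤ n → P.b (v i) = lam i := fun i hi => (hvmem i hi).2
  have hvmono : ∀ i, i < n → v i ≤ v (i+1) := by
    intro i hi
    have hvi := hvIcc i hi.le
    have hco : ContinuousOn P.b (Icc (v i) tstar) := hcont'.mono (Icc_subset_Icc hvi.1 le_rfl)
    have hmem : lam (i+1) ∈ Icc (P.b tstar) (P.b (v i)) := by
      rw [hvb i hi.le]
      refine ⟨hbt.trans (hlam_le (i+1) (Nat.succ_le_of_lt hi)), ?_⟩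
      simp only [hlam]; push_cast; nlinarith
    obtain ⟨u, hu, hbu⟩ := intermediate_value_Icc' hvi.2 hco hmem
    exact le_trans hu.1 (le_csSup (hSbdd (i+1)) ⟨⟨hvi.1.trans hu.1, hu.2⟩, hbu⟩)
  have hbound : ∀ i, i < n → ∀ t ∈ Ioo (v i) (v (i+1)), P.b t ≤ lam i := by
    intro i hi t ht
    by_contra hgt
    push_neg at hgt
    have hv0t : (0:ℝ) ≤ t := le_trans (hvIcc i hi.le).1 ht.1.le
    have htle : t ≤ tstar := le_trans ht.2.le (hvIcc (i+1) (Nat.succ_le_of_lt hi)).2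
    have hco : ContinuousOn P.b (Icc t tstar) := hcont'.mono (Icc_subset_Icc hv0t le_rfl)
    have hmem : lam i ∈ Icc (P.b tstar) (P.b t) := ⟨hbt.trans (hlam_le i hi.le), hgt.le⟩
    obtain ⟨u, hu, hbu⟩ := intermediate_value_Icc' htle hco hmem
    have humem : u ∈ S i := ⟨⟨hv0t.trans hu.1, hu.2⟩, hbu⟩
    have : u ≤ v i := le_csSup (hSbdd i) humem
    linarith [ht.1, hu.1]
  have hsum : ∑ i ∈ Finset.range n, ENNReal.ofReal ((i:ℝ)*h*h)
      ≤ ∑ i ∈ Finset.range n, ∫⁻ t in Ioo (v i) (v (i+1)), igd f l P t := by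
    apply Finset.sum_le_sum
    intro i hi
    rw [Finset.mem_range] at hi
    have heq : (1 - lam i) * |P.b (v (i+1)) - P.b (v i)| = (i:ℝ)*h*h := by
      rw [hvb i hi.le, hvb (i+1) (Nat.succ_le_of_lt hi)]
      simp only [hlam]
      push_cast
      rw [show (1 - ((i:ℝ)+1)*h) - (1 - (i:ℝ)*h) = -h by ring, abs_neg, abs_of_pos hhpos]
      ring
    calc ENNReal.ofReal ((i:ℝ)*h*h)
        = ENNReal.ofReal ((1 - lam i) * |P.b (v (i+1)) - P.b (v i)|) := by rw [heq]
      _ ≤ _ := interval_bound f l P (hvIcc i hi.le).1 (hvmono i hi)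
          ((hvIcc (i+1) (Nat.succ_le_of_lt hi)).2.trans h01) (hlam1 i) (hbound i hi)
  have hofsum : ENNReal.ofReal (((n:ℝ)*(n-1)/2) * h^2)
      = ∑ i ∈ Finset.range n, ENNReal.ofReal ((i:ℝ)*h*h) := by
    rw [← ENNReal.ofReal_sum_of_nonneg]
    · congr 1
      have : (∑ i ∈ Finset.range n, ((i:ℝ)*h*h)) = (∑ i ∈ Finset.range n, (i:ℝ))*(h*h) := by
        rw [Finset.sum_mul]
        exact Finset.sum_congr rfl (fun i _ => by ring)
      rw [this, sum_range_real]
      ring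
    · intro i _
      positivity
  rw [hofsum]
  calc ∑ i ∈ Finset.range n, ENNReal.ofReal ((i:ℝ)*h*h)
      ≤ ∑ i ∈ Finset.range n, ∫⁻ t in Ioo (v i) (v (i+1)), igd f l P t := hsum
    _ ≤ ∫⁻ t in Ioo (v 0) (v n), igd f l P t := chain_sum _ v n hvmono
    _ ≤ ∫⁻ t in Ioo (0:ℝ) tstar, igd f l P t :=
        MeasureTheory.lintegral_mono_set (Set.Ioo_subset_Ioo (hvIcc 0 (Nat.zero_le n)).1 (hvIcc n le_rfl).2)

lemma right_sum (f : ℝ → ℝ) (l : ℝ) (P : H1Pair 1) {tstar δ : ℝ} (n : ℕ) (hn : 0 < n)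
    (htmem : tstar ∈ Icc (0:ℝ) 1) (hbt : P.b tstar ≤ δ) (hδ1 : δ < 1) (hb1 : P.b 1 = 1) :
    ENNReal.ofReal (((n:ℝ)*(n-1)/2) * ((1-δ)/n)^2) ≤ ∫⁻ t in Ioo tstar (1:ℝ), igd f l P t := by
  set h := (1-δ)/(n:ℝ) with hh
  have hnpos : (0:ℝ) < n := Nat.cast_pos.2 hn
  have hhpos : 0 < h := div_pos (by linarith) hnpos
  have hnh : (n:ℝ)*h = 1-δ := by rw [hh]; field_simp
  set lam : ℕ → ℝ := fun i => δ + i*h with hlam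
  have hlam_ge : ∀ i : ℕ, δ ≤ lam i := by
    intro i
    have := mul_nonneg (Nat.cast_nonneg (α := ℝ) i) hhpos.le
    simp only [hlam]; linarith
  have hlam1 : ∀ i : ℕ, i ≤ n → lam i ≤ 1 := by
    intro i hi
    have h1 : (i:ℝ) ≤ n := Nat.cast_le.2 hi
    have h2 : (i:ℝ)*h ≤ n*h := by nlinarith
    simp only [hlam]; nlinarith
  have ht0 : 0 ≤ tstar := htmem.1
  have h01 : tstar ≤ 1 := htmem.2
  have hcont' : ContinuousOn P.b (Icc tstar 1) := (b_contOn P).mono (Icc_subset_Icc ht0 le_rfl)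
  set S : ℕ → Set ℝ := fun i => {t ∈ Icc tstar 1 | P.b t = lam i} with hS
  have hSclosed : ∀ i, IsClosed (S i) := by
    intro i
    have heq : S i = Icc tstar 1 ∩ P.b ⁻¹' {lam i} := by
      ext t; simp only [hS, Set.mem_setOf_eq, Set.mem_inter_iff, Set.mem_preimage,
        Set.mem_singleton_iff]
    rw [heq]
    exact hcont'.preimage_isClosed_of_isClosed isClosed_Icc isClosed_singleton
  have hSne : ∀ i, i ≤ n → (S i).Nonempty := by
    intro i hi
    have hmem : lam i ∈ Icc (P.b tstar) (P.b 1) :=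
      ⟨le_trans hbt (hlam_ge i), by rw [hb1]; exact hlam1 i hi⟩
    obtain ⟨t, ht, hbtv⟩ := intermediate_value_Icc h01 hcont' hmem
    exact ⟨t, ht, hbtv⟩
  have hSbdd : ∀ i, BddBelow (S i) := fun i => (bddBelow_Icc).mono (fun t ht => ht.1)
  set v : ℕ → ℝ := fun i => sInf (S i) with hv
  have hvmem : ∀ i, i ≤ n → v i ∈ S i := fun i hi => (hSclosed i).csInf_mem (hSne i hi) (hSbdd i)
  have hvIcc : ∀ i, i ≤ n → v i ∈ Icc tstar 1 := fun i hi => (hvmem i hi).1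
  have hvb : ∀ i, i ≤ n → P.b (v i) = lam i := fun i hi => (hvmem i hi).2
  have hvmono : ∀ i, i < n → v i ≤ v (i+1) := by
    intro i hi
    have hvi := hvIcc (i+1) (Nat.succ_le_of_lt hi)
    have hco : ContinuousOn P.b (Icc tstar (v (i+1))) := hcont'.mono (Icc_subset_Icc le_rfl hvi.2)
    have hmem : lam i ∈ Icc (P.b tstar) (P.b (v (i+1))) := by
      rw [hvb (i+1) (Nat.succ_le_of_lt hi)]
      refine ⟨hbt.trans (hlam_ge i), ?_⟩
      simp only [hlam]; push_cast; nlinarith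
    obtain ⟨u, hu, hbu⟩ := intermediate_value_Icc hvi.1 hco hmem
    exact le_trans (csInf_le (hSbdd i) ⟨⟨hu.1, hu.2.trans hvi.2⟩, hbu⟩) hu.2
  have hbound : ∀ i, i < n → ∀ t ∈ Ioo (v i) (v (i+1)), P.b t ≤ lam (i+1) := by
    intro i hi t ht
    by_contra hgt
    push_neg at hgt
    have hvi1 := hvIcc (i+1) (Nat.succ_le_of_lt hi)
    have htstar : tstar ≤ t := le_trans (hvIcc i hi.le).1 ht.1.le
    have ht1 : t ≤ 1 := le_trans ht.2.le hvi1.2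
    have hco : ContinuousOn P.b (Icc tstar t) := hcont'.mono (Icc_subset_Icc le_rfl ht1)
    have hmem : lam (i+1) ∈ Icc (P.b tstar) (P.b t) := ⟨hbt.trans (hlam_ge (i+1)), hgt.le⟩
    obtain ⟨u, hu, hbu⟩ := intermediate_value_Icc htstar hco hmem
    have humem : u ∈ S (i+1) := ⟨⟨hu.1, hu.2.trans ht1⟩, hbu⟩
    have : v (i+1) ≤ u := csInf_le (hSbdd (i+1)) humem
    linarith [ht.2, hu.2]
  have hsum : ∑ i ∈ Finset.range n, ENNReal.ofReal (((n:ℝ)-1-i)*h*h)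
      ≤ ∑ i ∈ Finset.range n, ∫⁻ t in Ioo (v i) (v (i+1)), igd f l P t := by
    apply Finset.sum_le_sum
    intro i hi
    rw [Finset.mem_range] at hi
    have hi1 : (i+1 : ℕ) ≤ n := Nat.succ_le_of_lt hi
    have heq : (1 - lam (i+1)) * |P.b (v (i+1)) - P.b (v i)| = ((n:ℝ)-1-i)*h*h := by
      rw [hvb i hi.le, hvb (i+1) hi1]
      simp only [hlam]
      push_cast
      rw [show (δ + ((i:ℝ)+1)*h) - (δ + (i:ℝ)*h) = h by ring, abs_of_pos hhpos]
      have hd : δ = 1 - (n:ℝ)*h := by linarith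
      rw [hd]
      ring
    calc ENNReal.ofReal (((n:ℝ)-1-i)*h*h)
        = ENNReal.ofReal ((1 - lam (i+1)) * |P.b (v (i+1)) - P.b (v i)|) := by rw [heq]
      _ ≤ _ := interval_bound f l P (ht0.trans (hvIcc i hi.le).1) (hvmono i hi)
          (hvIcc (i+1) hi1).2 (hlam1 (i+1) hi1) (hbound i hi)
  have hofsum : ENNReal.ofReal (((n:ℝ)*(n-1)/2) * h^2)
      = ∑ i ∈ Finset.range n, ENNReal.ofReal (((n:ℝ)-1-i)*h*h) := by
    rw [← ENNReal.ofReal_sum_of_nonneg]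
    · congr 1
      have h1 : (∑ i ∈ Finset.range n, (((n:ℝ)-1-i)*h*h))
          = (∑ i ∈ Finset.range n, ((n:ℝ)-1-i))*(h*h) := by
        rw [Finset.sum_mul]
        exact Finset.sum_congr rfl (fun i _ => by ring)
      have h2 : (∑ i ∈ Finset.range n, ((n:ℝ)-1-(i:ℝ))) = n*((n:ℝ)-1) - n*(n-1)/2 := by
        rw [Finset.sum_sub_distrib, Finset.sum_const, sum_range_real]
        simp only [Finset.card_range, nsmul_eq_mul]
      rw [h1, h2]
      ring
    · intro i hi
      rw [Finset.mem_range] at hi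
      have h1 : (i:ℝ) ≤ (n:ℝ)-1 := by
        have : (i:ℝ)+1 ≤ n := by exact_mod_cast Nat.succ_le_of_lt hi
        linarith
      have : (0:ℝ) ≤ (n:ℝ)-1-i := by linarith
      positivity
  rw [hofsum]
  calc ∑ i ∈ Finset.range n, ENNReal.ofReal (((n:ℝ)-1-i)*h*h)
      ≤ ∑ i ∈ Finset.range n, ∫⁻ t in Ioo (v i) (v (i+1)), igd f l P t := hsum
    _ ≤ ∫⁻ t in Ioo (v 0) (v n), igd f l P t := chain_sum _ v n hvmono
    _ ≤ ∫⁻ t in Ioo tstar (1:ℝ), igd f l P t :=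
        MeasureTheory.lintegral_mono_set (Set.Ioo_subset_Ioo (hvIcc 0 (Nat.zero_le n)).1 (hvIcc n le_rfl).2)

lemma energy_lower_alpha (f : ℝ → ℝ) (l : ℝ) (P : H1Pair 1) {δ c s : ℝ} (hc : 0 ≤ c)
    (hcmin : ∀ x ∈ Icc δ 1, c ≤ damageExt f l x)
    (hrange : ∀ t ∈ Icc (0:ℝ) 1, P.b t ∈ Icc (0:ℝ) 1) (hb : ∀ t ∈ Icc (0:ℝ) 1, δ ≤ P.b t)
    (ha0 : P.a 0 = 0) (ha1 : P.a 1 = s) :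
    ENNReal.ofReal (c * s) ≤ surfEnergy f l P := by
  rw [surfEnergy_eq]
  have step1 : ∫⁻ t in Ioo (0:ℝ) 1, ENNReal.ofReal (c * |P.da t|)
      ≤ ∫⁻ t in Ioo (0:ℝ) 1, igd f l P t := by
    apply MeasureTheory.lintegral_mono_ae
    rw [MeasureTheory.ae_restrict_iff' measurableSet_Ioo]
    filter_upwards with t ht
    apply ENNReal.ofReal_le_ofReal
    have htIcc : t ∈ Icc (0:ℝ) 1 := Ioo_subset_Icc_self ht
    have hbmem : P.b t ∈ Icc δ 1 := ⟨hb t htIcc, (hrange t htIcc).2⟩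
    have hcle : c ≤ damageExt f l (P.b t) := hcmin _ hbmem
    have h2 : damageExt f l (P.b t) * |P.da t|
        = Real.sqrt ((damageExt f l (P.b t))^2 * (P.da t)^2) := by
      rw [← mul_pow, Real.sqrt_sq_eq_abs, abs_mul, abs_of_nonneg (hc.trans hcle)]
    calc c * |P.da t| ≤ damageExt f l (P.b t) * |P.da t| :=
          mul_le_mul_of_nonneg_right hcle (abs_nonneg _)
      _ = Real.sqrt ((damageExt f l (P.b t))^2 * (P.da t)^2) := h2
      _ ≤ _ := by
          apply Real.sqrt_le_sqrt
          nlinarith [sq_nonneg ((1-P.b t)*P.db t), mul_pow (1-P.b t) (P.db t) 2]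
  refine le_trans ?_ step1
  have hint : IntegrableOn P.da (Ioo (0:ℝ) 1) volume := intOn_da P
  have habs : ∫⁻ t in Ioo (0:ℝ) 1, ENNReal.ofReal (c * |P.da t|)
      = ENNReal.ofReal (∫ t in Ioo (0:ℝ) 1, c * |P.da t|) := by
    rw [MeasureTheory.ofReal_integral_eq_lintegral_ofReal]
    · exact (hint.abs.const_mul _)
    · filter_upwards with t
      exact mul_nonneg hc (abs_nonneg _)
  rw [habs]
  apply ENNReal.ofReal_le_ofReal
  rw [MeasureTheory.integral_const_mul]
  apply mul_le_mul_of_nonneg_left _ hc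
  have hda : ∫ t in Ioo (0:ℝ) 1, P.da t = s := by
    rw [← MeasureTheory.integral_Ioc_eq_integral_Ioo]
    have := P.a_ftc 1 ⟨zero_le_one, le_rfl⟩
    rw [ha0, ha1] at this
    linarith
  calc s ≤ |s| := le_abs_self s
    _ = |∫ t in Ioo (0:ℝ) 1, P.da t| := by rw [hda]
    _ ≤ ∫ t in Ioo (0:ℝ) 1, |P.da t| := by
        simpa [Real.norm_eq_abs] using
          MeasureTheory.norm_integral_le_integral_norm (μ := volume.restrict (Ioo (0:ℝ) 1)) P.da

lemma damage_min (f : ℝ → ℝ) (l : ℝ) (hf : AdmissibleDamage f l) {δ : ℝ}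
    (h0 : 0 < δ) (h1 : δ < 1) :
    ∃ c, 0 < c ∧ ∀ x ∈ Icc δ 1, c ≤ damageExt f l x := by
  obtain ⟨hcont, hmono, hnn, hzero, hl, hlim⟩ := hf
  have hev : ∀ᶠ x in nhdsWithin 1 (Iio 1), l/2 < (1-x)*f x :=
    hlim.eventually (eventually_gt_nhds (by linarith))
  rw [eventually_nhdsWithin_iff] at hev
  obtain ⟨ε, hε, hball⟩ := Metric.eventually_nhds_iff.1 hev
  set η := max δ (1 - ε/2) with hη
  have hηδ : δ ≤ η := le_max_left _ _
  have hη1 : η < 1 := by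
    apply max_lt h1; linarith
  have hfδpos : 0 < f δ := by
    have hδmem : δ ∈ Ico (0:ℝ) 1 := ⟨h0.le, h1⟩
    rcases lt_or_eq_of_le (hnn δ hδmem) with h | h
    · exact h
    · exact absurd ((hzero δ hδmem).1 h.symm) (ne_of_gt h0)
  refine ⟨min (l/2) ((1-η)*(f δ)), lt_min (by linarith) (mul_pos (by linarith) hfδpos), ?_⟩
  intro x hx
  rcases eq_or_lt_of_le hx.2 with hx1 | hx1
  · rw [damageExt, if_pos hx1]
    exact le_trans (min_le_left _ _) (by linarith)
  · rw [damageExt, if_neg (ne_of_lt hx1)]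
    rcases le_or_gt x η with hxη | hxη
    · refine le_trans (min_le_right _ _) ?_
      have hxmem : x ∈ Ico (0:ℝ) 1 := ⟨h0.le.trans hx.1, hx1⟩
      have hfx : f δ ≤ f x := hmono ⟨h0.le, h1⟩ hxmem hx.1
      have : (0:ℝ) < 1 - η := by linarith
      nlinarith [hnn x hxmem]
    · refine le_trans (min_le_left _ _) ?_
      have hdist : dist x 1 < ε := by
        rw [Real.dist_eq, abs_of_nonpos (by linarith)]
        have : 1 - ε/2 ≤ η := le_max_right _ _
        linarith
      exact (hball hdist hx1).le

lemma lower_main (f : ℝ → ℝ) (l : ℝ) (hf : AdmissibleDamage f l) {ε : ℝ}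
    (hε0 : 0 < ε) (hε1 : ε < 1) :
    ∃ S : ℝ, 0 < S ∧ ∀ s, S ≤ s → ∀ P : H1Pair 1, P.Admissible s →
      ENNReal.ofReal (1 - ε) ≤ surfEnergy f l P := by
  have hδ0 : 0 < ε/4 := by linarith
  have hδ1 : ε/4 < 1 := by linarith
  obtain ⟨c, hcpos, hcmin⟩ := damage_min f l hf hδ0 hδ1
  set δ : ℝ := ε/4 with hδ
  set n : ℕ := max 2 ⌈(4:ℝ)/ε⌉₊ with hn
  have hnpos : 0 < n := lt_of_lt_of_le two_pos (le_max_left _ _)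
  have hn2 : (2:ℝ) ≤ n := by exact_mod_cast le_max_left 2 ⌈(4:ℝ)/ε⌉₊
  have hninv : (1:ℝ)/n ≤ ε/4 := by
    have h1 : (4:ℝ)/ε ≤ ⌈(4:ℝ)/ε⌉₊ := Nat.le_ceil _
    have h2 : ((⌈(4:ℝ)/ε⌉₊ : ℕ) : ℝ) ≤ n := by exact_mod_cast le_max_right 2 ⌈(4:ℝ)/ε⌉₊
    have h3 : (4:ℝ)/ε ≤ n := le_trans h1 h2
    rw [div_le_div_iff₀ (by linarith : (0:ℝ) < (n:ℝ)) (by linarith : (0:ℝ) < 4)]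
    have h4 : (4:ℝ) = (4/ε)*ε := by field_simp
    have h6 : (4/ε)*ε ≤ (n:ℝ)*ε := mul_le_mul_of_nonneg_right h3 hε0.le
    linarith
  refine ⟨1/c, by positivity, ?_⟩
  intro s hs P hP
  obtain ⟨hrange, ha0, ha1, hb0, hb1⟩ := hP
  by_cases hex : ∃ t ∈ Icc (0:ℝ) 1, P.b t ≤ δ
  · obtain ⟨tstar, htmem, hbt⟩ := hex
    have hL := left_sum f l P n hnpos htmem hbt hδ1 hb0
    have hR := right_sum f l P n hnpos htmem hbt hδ1 hb1
    have hdisj : Disjoint (Ioo (0:ℝ) tstar) (Ioo tstar 1) := by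
      rw [Set.disjoint_left]
      rintro t ⟨_, h1⟩ ⟨h2, _⟩
      exact absurd h2 (not_lt.2 h1.le)
    have hsplit : (∫⁻ t in Ioo (0:ℝ) tstar, igd f l P t) + ∫⁻ t in Ioo tstar (1:ℝ), igd f l P t
        ≤ surfEnergy f l P := by
      rw [surfEnergy_eq, ← MeasureTheory.lintegral_union measurableSet_Ioo hdisj]
      apply MeasureTheory.lintegral_mono_set
      rintro t (⟨h1, h2⟩ | ⟨h1, h2⟩)
      · exact ⟨h1, h2.trans_le htmem.2⟩
      · exact ⟨lt_of_le_of_lt htmem.1 h1, h2⟩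
    set T : ℝ := ((n:ℝ)*(n-1)/2) * ((1-δ)/n)^2 with hT
    have hTnn : 0 ≤ T := by
      have h1 : (0:ℝ) ≤ (n:ℝ)-1 := by linarith
      have h2 : (0:ℝ) ≤ (n:ℝ) := by linarith
      positivity
    calc ENNReal.ofReal (1-ε) ≤ ENNReal.ofReal (T + T) := by
          apply ENNReal.ofReal_le_ofReal
          have hTeq : T + T = (1-δ)^2*(1-1/n) := by
            rw [hT]
            field_simp
            ring
          rw [hTeq, hδ]
          have h5 : 1 - ε/4 ≤ 1 - (1:ℝ)/n := by linarith
          have hkey : (1-ε/4)^2*(1-ε/4) ≤ (1-ε/4)^2*(1-1/(n:ℝ)) :=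
            mul_le_mul_of_nonneg_left h5 (sq_nonneg _)
          have e2 : ε^2 ≤ ε := by nlinarith
          have e3 : ε^3 ≤ ε^2 := by nlinarith
          nlinarith [hkey, e2, e3, hε0]
      _ = ENNReal.ofReal T + ENNReal.ofReal T := ENNReal.ofReal_add hTnn hTnn
      _ ≤ (∫⁻ t in Ioo (0:ℝ) tstar, igd f l P t) + ∫⁻ t in Ioo tstar (1:ℝ), igd f l P t :=
          add_le_add hL hR
      _ ≤ surfEnergy f l P := hsplit
  · push_neg at hex
    refine le_trans ?_ (energy_lower_alpha f l P hcpos.le hcmin hrange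
      (fun t ht => (hex t ht).le) ha0 ha1)
    apply ENNReal.ofReal_le_ofReal
    have hs' : 1/c ≤ s := hs
    have h1 : 1 ≤ c * s := by
      rw [div_le_iff₀ hcpos] at hs'
      nlinarith
    linarith

section Competitor

noncomputable def compP (s : ℝ) : H1Pair 1 where
  a := fun t => 3*s*(max (min t (2/3) - 1/3) 0)
  b := fun t => 1 - 3*min t (1/3) + 3*max (t - 2/3) 0
  da := (Ioc (1/3:ℝ) (2/3)).indicator (fun _ => 3*s)
  db := fun t => (Ioc (0:ℝ) (1/3)).indicator (fun _ => (-3:ℝ)) t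
    + (Ioc (2/3:ℝ) 1).indicator (fun _ => (3:ℝ)) t
  da_mem := memLp_indicator_const 2 measurableSet_Ioc _ (Or.inr (measure_ne_top _ _))
  db_mem := (memLp_indicator_const (μ := volume.restrict (Ioo (0:ℝ) 1)) (s := Ioc (0:ℝ) (1/3)) 2 measurableSet_Ioc (-3:ℝ) (Or.inr (measure_ne_top _ _))).add
    (memLp_indicator_const (μ := volume.restrict (Ioo (0:ℝ) 1)) (s := Ioc (2/3:ℝ) 1) 2 measurableSet_Ioc (3:ℝ) (Or.inr (measure_ne_top _ _)))
  a_ftc := by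
    intro x hx
    have hint : ∫ t in Ioc (0:ℝ) x, (Ioc (1/3:ℝ) (2/3)).indicator (fun _ => 3*s) t
        = (volume (Ioc (1/3:ℝ) (2/3) ∩ Ioc 0 x)).toReal * (3*s) := by
      rw [MeasureTheory.integral_indicator_const _ measurableSet_Ioc,
        measureReal_def, Measure.restrict_apply measurableSet_Ioc, smul_eq_mul]
    simp only [hint, Set.Ioc_inter_Ioc, Real.volume_Ioc, ENNReal.toReal_ofReal']
    rw [show max (1/3:ℝ) 0 = 1/3 by norm_num, min_comm (2/3:ℝ) x,
      show min (0:ℝ) (2/3) = 0 by norm_num, show max ((0:ℝ)-1/3) 0 = 0 by norm_num]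
    ring
  b_ftc := by
    intro x hx
    haveI : IsFiniteMeasure (volume.restrict (Ioc (0:ℝ) x)) :=
      ⟨by rw [Measure.restrict_apply_univ, Real.volume_Ioc]; exact ENNReal.ofReal_lt_top⟩
    have hi1 : Integrable ((Ioc (0:ℝ) (1/3)).indicator (fun _ => (-3:ℝ)))
        (volume.restrict (Ioc (0:ℝ) x)) := (integrable_const _).indicator measurableSet_Ioc
    have hi2 : Integrable ((Ioc (2/3:ℝ) 1).indicator (fun _ => (3:ℝ)))
        (volume.restrict (Ioc (0:ℝ) x)) := (integrable_const _).indicator measurableSet_Ioc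
    have hadd : ∫ t in Ioc (0:ℝ) x, ((Ioc (0:ℝ) (1/3)).indicator (fun _ => (-3:ℝ)) t
        + (Ioc (2/3:ℝ) 1).indicator (fun _ => (3:ℝ)) t)
        = (volume (Ioc (0:ℝ) (1/3) ∩ Ioc 0 x)).toReal * (-3)
          + (volume (Ioc (2/3:ℝ) 1 ∩ Ioc 0 x)).toReal * 3 := by
      rw [MeasureTheory.integral_add hi1 hi2,
        MeasureTheory.integral_indicator_const _ measurableSet_Ioc,
        MeasureTheory.integral_indicator_const _ measurableSet_Ioc,
        measureReal_def, measureReal_def,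
        Measure.restrict_apply measurableSet_Ioc, Measure.restrict_apply measurableSet_Ioc,
        smul_eq_mul, smul_eq_mul]
    simp only [hadd, Set.Ioc_inter_Ioc, Real.volume_Ioc, ENNReal.toReal_ofReal']
    rw [show max (0:ℝ) 0 = 0 by norm_num, show max (2/3:ℝ) 0 = 2/3 by norm_num,
      min_comm (1/3:ℝ) x, min_eq_right hx.2,
      show min (0:ℝ) (1/3) = 0 by norm_num, show max ((0:ℝ)-2/3) 0 = 0 by norm_num,
      sub_zero, max_eq_left (le_min hx.1 (by norm_num) : (0:ℝ) ≤ min x (1/3))]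
    ring

end Competitor

lemma compP_admissible (s : ℝ) : (compP s).Admissible s := by
  refine ⟨?_, ?_, ?_, ?_, ?_⟩
  · intro t ht
    obtain ⟨ht0, ht1⟩ := ht
    show (0:ℝ) ≤ 1 - 3*min t (1/3) + 3*max (t - 2/3) 0 ∧ 1 - 3*min t (1/3) + 3*max (t - 2/3) 0 ≤ 1
    rcases le_total t (1/3) with h | h
    · rw [min_eq_left h, max_eq_right (by linarith : t - 2/3 ≤ 0)]
      constructor <;> linarith
    · rw [min_eq_right h]
      rcases le_total t (2/3) with h2 | h2
      · rw [max_eq_right (by linarith : t - 2/3 ≤ 0)]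
        norm_num
      · rw [max_eq_left (by linarith : (0:ℝ) ≤ t - 2/3)]
        constructor <;> linarith
  · show 3*s*(max (min 0 (2/3) - 1/3) 0) = 0
    norm_num
  · show 3*s*(max (min 1 (2/3) - 1/3) 0) = s
    norm_num
    ring
  · show 1 - 3*min (0:ℝ) (1/3) + 3*max ((0:ℝ) - 2/3) 0 = 1
    norm_num
  · show 1 - 3*min (1:ℝ) (1/3) + 3*max ((1:ℝ) - 2/3) 0 = 1
    norm_num

lemma compP_energy (f : ℝ → ℝ) (l : ℝ) (hf0 : f 0 = 0) (s : ℝ) :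
    surfEnergy f l (compP s) ≤ 1 := by
  rw [surfEnergy_eq]
  have hcong : ∫⁻ t in Ioo (0:ℝ) 1, igd f l (compP s) t
      = ∫⁻ t in Ioc (0:ℝ) 1, igd f l (compP s) t := by
    rw [Measure.restrict_congr_set Ioo_ae_eq_Ioc]
  rw [hcong]
  have hsplit : Ioc (0:ℝ) 1 = (Ioc 0 (1/3) ∪ Ioc (1/3) (2/3)) ∪ Ioc (2/3) 1 := by
    rw [Set.Ioc_union_Ioc_eq_Ioc (by norm_num : (0:ℝ) ≤ 1/3) (by norm_num : (1/3:ℝ) ≤ 2/3),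
      Set.Ioc_union_Ioc_eq_Ioc (by norm_num : (0:ℝ) ≤ 2/3) (by norm_num : (2/3:ℝ) ≤ 1)]
  have hd1 : Disjoint (Ioc (0:ℝ) (1/3)) (Ioc (1/3:ℝ) (2/3)) := (Set.Ioc_disjoint_Ioc_of_le le_rfl)
  have hd2 : Disjoint (Ioc (0:ℝ) (1/3) ∪ Ioc (1/3:ℝ) (2/3)) (Ioc (2/3:ℝ) 1) := by
    rw [Set.disjoint_union_left]
    constructor
    · rw [Set.Ioc_disjoint_Ioc]
      norm_num
    · exact (Set.Ioc_disjoint_Ioc_of_le le_rfl)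
  rw [hsplit, MeasureTheory.lintegral_union measurableSet_Ioc hd2,
    MeasureTheory.lintegral_union measurableSet_Ioc hd1]
  -- piece 1
  have h2 : ∀ t ∈ Ioc (0:ℝ) (1/3), igd f l (compP s) t = ENNReal.ofReal (9*t) := by
    intro t ht
    have hda : (compP s).da t = 0 := by
      show (Ioc (1/3:ℝ) (2/3)).indicator (fun _ => 3*s) t = 0
      exact Set.indicator_of_notMem (fun hmem => absurd hmem.1 (not_lt.2 ht.2)) _
    have hdb : (compP s).db t = -3 := by
      show (Ioc (0:ℝ) (1/3)).indicator (fun _ => (-3:ℝ)) t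
        + (Ioc (2/3:ℝ) 1).indicator (fun _ => (3:ℝ)) t = -3
      rw [Set.indicator_of_mem ht,
        Set.indicator_of_notMem (fun hmem : t ∈ Ioc (2/3:ℝ) 1 =>
          absurd hmem.1 (not_lt.2 (ht.2.trans (by norm_num))))]
      norm_num
    have hb : (compP s).b t = 1 - 3*t := by
      show 1 - 3*min t (1/3) + 3*max (t - 2/3) 0 = 1 - 3*t
      rw [min_eq_left ht.2, max_eq_right (by linarith [ht.2] : t - 2/3 ≤ 0)]
      ring
    rw [igd, hda, hdb, hb]
    congr 1
    have heq : (damageExt f l (1-3*t))^2 * (0:ℝ)^2 + (1-(1-3*t))^2*(-3:ℝ)^2 = (9*t)^2 := by ring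
    rw [heq, Real.sqrt_sq (by linarith [ht.1] : (0:ℝ) ≤ 9*t)]
  rw [MeasureTheory.setLIntegral_congr_fun_ae measurableSet_Ioc (MeasureTheory.ae_of_all _ h2)]
  have hcalc1 : ∫⁻ t in Ioc (0:ℝ) (1/3), ENNReal.ofReal (9*t) = ENNReal.ofReal (1/2) := by
    rw [← MeasureTheory.ofReal_integral_eq_lintegral_ofReal]
    · congr 1
      rw [← intervalIntegral.integral_of_le (by norm_num : (0:ℝ) ≤ 1/3),
        intervalIntegral.integral_const_mul, integral_id]
      norm_num
    · exact (continuous_const.mul continuous_id).integrableOn_Ioc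
    · refine (MeasureTheory.ae_restrict_iff' measurableSet_Ioc).2 ?_
      filter_upwards with t ht
      show (0:ℝ) ≤ 9*t
      linarith [ht.1]
  rw [hcalc1]
  -- piece 2
  have h3 : ∀ t ∈ Ioc (1/3:ℝ) (2/3), igd f l (compP s) t = 0 := by
    intro t ht
    have hdb : (compP s).db t = 0 := by
      show (Ioc (0:ℝ) (1/3)).indicator (fun _ => (-3:ℝ)) t
        + (Ioc (2/3:ℝ) 1).indicator (fun _ => (3:ℝ)) t = 0
      rw [Set.indicator_of_notMem (fun hmem : t ∈ Ioc (0:ℝ) (1/3) =>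
          absurd hmem.2 (not_le.2 ht.1)),
        Set.indicator_of_notMem (fun hmem : t ∈ Ioc (2/3:ℝ) 1 =>
          absurd hmem.1 (not_lt.2 ht.2))]
      norm_num
    have hb : (compP s).b t = 0 := by
      show 1 - 3*min t (1/3) + 3*max (t - 2/3) 0 = 0
      rw [min_eq_right ht.1.le, max_eq_right (by linarith [ht.2] : t - 2/3 ≤ 0)]
      ring
    have hdext : damageExt f l ((compP s).b t) = 0 := by
      rw [hb, damageExt, if_neg (by norm_num : (0:ℝ) ≠ 1), hf0]
      ring
    rw [igd, hdext, hdb, hb]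
    have heq : (0:ℝ)^2 * ((compP s).da t)^2 + (1-(0:ℝ))^2*(0:ℝ)^2 = 0 := by ring
    rw [heq, Real.sqrt_zero, ENNReal.ofReal_zero]
  rw [MeasureTheory.setLIntegral_congr_fun_ae measurableSet_Ioc (MeasureTheory.ae_of_all _ h3),
    MeasureTheory.lintegral_zero]
  -- piece 3
  have h4 : ∀ t ∈ Ioc (2/3:ℝ) 1, igd f l (compP s) t = ENNReal.ofReal (9 - 9*t) := by
    intro t ht
    have hda : (compP s).da t = 0 := by
      show (Ioc (1/3:ℝ) (2/3)).indicator (fun _ => 3*s) t = 0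
      exact Set.indicator_of_notMem (fun hmem => absurd hmem.2 (not_le.2 ht.1)) _
    have hdb : (compP s).db t = 3 := by
      show (Ioc (0:ℝ) (1/3)).indicator (fun _ => (-3:ℝ)) t
        + (Ioc (2/3:ℝ) 1).indicator (fun _ => (3:ℝ)) t = 3
      rw [Set.indicator_of_notMem (fun hmem : t ∈ Ioc (0:ℝ) (1/3) =>
          absurd hmem.2 (not_le.2 (lt_of_le_of_lt (by norm_num) ht.1))),
        Set.indicator_of_mem ht]
      norm_num
    have hb : (compP s).b t = 3*t - 2 := by
      show 1 - 3*min t (1/3) + 3*max (t - 2/3) 0 = 3*t - 2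
      rw [min_eq_right (le_trans (by norm_num) ht.1.le),
        max_eq_left (by linarith [ht.1] : (0:ℝ) ≤ t - 2/3)]
      ring
    rw [igd, hda, hdb, hb]
    congr 1
    have heq : (damageExt f l (3*t-2))^2 * (0:ℝ)^2 + (1-(3*t-2))^2*(3:ℝ)^2 = (9-9*t)^2 := by ring
    rw [heq, Real.sqrt_sq (by linarith [ht.2] : (0:ℝ) ≤ 9-9*t)]
  rw [MeasureTheory.setLIntegral_congr_fun_ae measurableSet_Ioc (MeasureTheory.ae_of_all _ h4)]
  have hcalc3 : ∫⁻ t in Ioc (2/3:ℝ) 1, ENNReal.ofReal (9 - 9*t) = ENNReal.ofReal (1/2) := by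
    rw [← MeasureTheory.ofReal_integral_eq_lintegral_ofReal]
    · congr 1
      rw [← intervalIntegral.integral_of_le (by norm_num : (2/3:ℝ) ≤ 1)]
      have : ∫ t in (2/3:ℝ)..1, (9 - 9*t) =
          (∫ t in (2/3:ℝ)..1, (9:ℝ)) - ∫ t in (2/3:ℝ)..1, 9*t := by
        rw [← intervalIntegral.integral_sub intervalIntegrable_const
          (IntervalIntegrable.const_mul intervalIntegral.intervalIntegrable_id 9)]
      rw [this, intervalIntegral.integral_const, intervalIntegral.integral_const_mul,
        integral_id]
      norm_num [smul_eq_mul]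
    · exact (continuous_const.sub (continuous_const.mul continuous_id)).integrableOn_Ioc
    · refine (MeasureTheory.ae_restrict_iff' measurableSet_Ioc).2 ?_
      filter_upwards with t ht
      show (0:ℝ) ≤ 9 - 9*t
      linarith [ht.2]
  rw [hcalc3, add_zero, ← ENNReal.ofReal_add (by norm_num) (by norm_num)]
  norm_num

/-- The surface energy density `g` satisfies `lim_{s→∞} g(s) = 1`. -/
theorem surfDensity_tendsto_one_atTop (f : ℝ → ℝ) (l : ℝ)
    (hf : AdmissibleDamage f l) :
    Filter.Tendsto (surfDensity f l) Filter.atTop (nhds 1) := by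
  have hf0 : f 0 = 0 := (hf.2.2.2.1 0 ⟨le_rfl, one_pos⟩).2 rfl
  rw [Metric.tendsto_atTop]
  intro ε hε
  set ε' := min (ε/2) (1/2) with hε'
  have hε'0 : 0 < ε' := lt_min (by linarith) one_half_pos
  have hε'1 : ε' < 1 := lt_of_le_of_lt (min_le_right _ _) one_half_lt_one
  obtain ⟨S, hSpos, hS⟩ := lower_main f l hf hε'0 hε'1
  refine ⟨S, fun s hs => ?_⟩
  set I := ⨅ (P : H1Pair 1) (_ : P.Admissible s), surfEnergy f l P with hI
  have hgd : surfDensity f l s = I.toReal := rfl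
  have hupper : I ≤ 1 := by
    refine le_trans (iInf₂_le (compP s) (compP_admissible s)) ?_
    exact compP_energy f l hf0 s
  have hne : I ≠ ⊤ := ne_top_of_le_ne_top ENNReal.one_ne_top hupper
  have hlower : ENNReal.ofReal (1 - ε') ≤ I :=
    le_iInf (fun P => le_iInf (fun hP => hS s hs P hP))
  have h1 : surfDensity f l s ≤ 1 := by
    rw [hgd]
    calc I.toReal ≤ (1:ℝ≥0∞).toReal := ENNReal.toReal_mono ENNReal.one_ne_top hupper
      _ = 1 := by simp
  have h2 : 1 - ε' ≤ surfDensity f l s := by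
    rw [hgd]
    calc 1 - ε' = (ENNReal.ofReal (1-ε')).toReal :=
        (ENNReal.toReal_ofReal (by linarith)).symm
      _ ≤ I.toReal := ENNReal.toReal_mono hne hlower
  rw [Real.dist_eq]
  have h3 : ε' ≤ ε/2 := min_le_left _ _
  calc |surfDensity f l s - 1| ≤ ε' := abs_le.2 ⟨by linarith, by linarith⟩
    _ < ε := by linarith
end Lower
end

section
/- In the model case f(s) = ℓ s/(1−s), the surface energy density satisfies g(s) ≤ ℓ s − (ℓ s)²/4 for all s ∈ [0, 2/ℓ]; in particular g(s) < min(1, ℓ s) for all s ∈ (0, 2/ℓ), so g does not coincide with the function min(1, ℓ s). -/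
open MeasureTheory Set Filter Topology

noncomputable def mda (s : ℝ) : ℝ → ℝ :=
  fun t => if t ≤ 1/3 then 0 else if t ≤ 2/3 then 3*s else 0

noncomputable def mdb (c : ℝ) : ℝ → ℝ :=
  fun t => if t ≤ 1/3 then -c else if t ≤ 2/3 then 0 else c

lemma measurable_mda (s : ℝ) : Measurable (mda s) :=
  Measurable.ite measurableSet_Iic measurable_const
    (Measurable.ite measurableSet_Iic measurable_const measurable_const)

lemma measurable_mdb (c : ℝ) : Measurable (mdb c) :=
  Measurable.ite measurableSet_Iic measurable_const
    (Measurable.ite measurableSet_Iic measurable_const measurable_const)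

lemma mda_intOn (s a b : ℝ) : IntegrableOn (mda s) (Set.Ioc a b) := by
  refine Measure.integrableOn_of_bounded measure_Ioc_lt_top.ne
    ((measurable_mda s).aestronglyMeasurable) (M := |3*s|) ?_
  filter_upwards with t
  unfold mda; split_ifs <;> simp [Real.norm_eq_abs, le_abs_self, abs_nonneg, abs_mul]

lemma mdb_intOn (c a b : ℝ) : IntegrableOn (mdb c) (Set.Ioc a b) := by
  refine Measure.integrableOn_of_bounded measure_Ioc_lt_top.ne
    ((measurable_mdb c).aestronglyMeasurable) (M := |c|) ?_
  filter_upwards with t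
  unfold mdb; split_ifs <;> simp [Real.norm_eq_abs, le_abs_self, abs_nonneg, neg_abs_le]

lemma intB1 (c x : ℝ) (h0 : 0 ≤ x) (h3 : x ≤ 1/3) :
    ∫ t in Set.Ioc (0:ℝ) x, mdb c t = -(c*x) := by
  rw [setIntegral_congr_fun measurableSet_Ioc (g := fun _ => -c)
    (fun t ht => by unfold mdb; rw [if_pos (le_trans ht.2 h3)])]
  simp [Real.volume_Ioc, ENNReal.toReal_ofReal h0, mul_comm, h0]

lemma intB2 (c x : ℝ) (h3 : 1/3 ≤ x) (h6 : x ≤ 2/3) :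
    ∫ t in Set.Ioc (0:ℝ) x, mdb c t = -(c/3) := by
  rw [← Set.Ioc_union_Ioc_eq_Ioc (by norm_num : (0:ℝ) ≤ 1/3) h3,
    setIntegral_union (Set.Ioc_disjoint_Ioc_of_le le_rfl) measurableSet_Ioc (mdb_intOn c 0 (1/3))
      (mdb_intOn c (1/3) x),
    intB1 c (1/3) (by norm_num) le_rfl,
    setIntegral_congr_fun measurableSet_Ioc (g := fun _ => (0:ℝ))
      (fun t ht => by unfold mdb; rw [if_neg (not_le.mpr ht.1), if_pos (le_trans ht.2 h6)])]
  simp; ring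

lemma intB3 (c x : ℝ) (h6 : 2/3 ≤ x) :
    ∫ t in Set.Ioc (0:ℝ) x, mdb c t = c*x - c := by
  rw [← Set.Ioc_union_Ioc_eq_Ioc (by norm_num : (0:ℝ) ≤ 2/3) h6,
    setIntegral_union (Set.Ioc_disjoint_Ioc_of_le le_rfl) measurableSet_Ioc (mdb_intOn c 0 (2/3))
      (mdb_intOn c (2/3) x),
    intB2 c (2/3) (by norm_num) le_rfl,
    setIntegral_congr_fun measurableSet_Ioc (g := fun _ => c)
      (fun t ht => by
        unfold mdb
        rw [if_neg (by linarith [ht.1] : ¬ t ≤ 1/3), if_neg (not_le.mpr ht.1)])]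
  have hx : (0:ℝ) ≤ x - 2/3 := by linarith
  rw [setIntegral_const, Real.volume_real_Ioc_of_le (by linarith), smul_eq_mul]
  ring

lemma intA1 (s x : ℝ) (h3 : x ≤ 1/3) :
    ∫ t in Set.Ioc (0:ℝ) x, mda s t = 0 := by
  rw [setIntegral_congr_fun measurableSet_Ioc (g := fun _ => (0:ℝ))
    (fun t ht => by unfold mda; rw [if_pos (le_trans ht.2 h3)])]
  simp

lemma intA2 (s x : ℝ) (h3 : 1/3 ≤ x) (h6 : x ≤ 2/3) :
    ∫ t in Set.Ioc (0:ℝ) x, mda s t = 3*s*(x - 1/3) := by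
  rw [← Set.Ioc_union_Ioc_eq_Ioc (by norm_num : (0:ℝ) ≤ 1/3) h3,
    setIntegral_union (Set.Ioc_disjoint_Ioc_of_le le_rfl) measurableSet_Ioc (mda_intOn s 0 (1/3))
      (mda_intOn s (1/3) x),
    intA1 s (1/3) le_rfl,
    setIntegral_congr_fun measurableSet_Ioc (g := fun _ => 3*s)
      (fun t ht => by unfold mda; rw [if_neg (not_le.mpr ht.1), if_pos (le_trans ht.2 h6)])]
  have hx : (0:ℝ) ≤ x - 1/3 := by linarith
  rw [setIntegral_const, Real.volume_real_Ioc_of_le (by linarith), smul_eq_mul]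
  ring

lemma intA3 (s x : ℝ) (h6 : 2/3 ≤ x) :
    ∫ t in Set.Ioc (0:ℝ) x, mda s t = s := by
  rw [← Set.Ioc_union_Ioc_eq_Ioc (by norm_num : (0:ℝ) ≤ 2/3) h6,
    setIntegral_union (Set.Ioc_disjoint_Ioc_of_le le_rfl) measurableSet_Ioc (mda_intOn s 0 (2/3))
      (mda_intOn s (2/3) x),
    intA2 s (2/3) (by norm_num) le_rfl,
    setIntegral_congr_fun measurableSet_Ioc (g := fun _ => (0:ℝ))
      (fun t ht => by
        unfold mda
        rw [if_neg (by linarith [ht.1] : ¬ t ≤ 1/3), if_neg (not_le.mpr ht.1)])]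
  simp; ring

instance inst_s6 : IsFiniteMeasure (volume.restrict (Set.Ioo (0:ℝ) 1)) := by
  constructor
  rw [Measure.restrict_apply_univ]
  exact measure_Ioo_lt_top

lemma mda_memL2 (s : ℝ) : MemLp (mda s) 2 (volume.restrict (Set.Ioo (0:ℝ) 1)) := by
  refine MemLp.of_bound ((measurable_mda s).aestronglyMeasurable) (|3*s|) ?_
  filter_upwards with t
  unfold mda; split_ifs <;> simp [Real.norm_eq_abs, le_abs_self, abs_nonneg, abs_mul]

lemma mdb_memL2 (c : ℝ) : MemLp (mdb c) 2 (volume.restrict (Set.Ioo (0:ℝ) 1)) := by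
  refine MemLp.of_bound ((measurable_mdb c).aestronglyMeasurable) (|c|) ?_
  filter_upwards with t
  unfold mdb; split_ifs <;> simp [Real.norm_eq_abs, le_abs_self, abs_nonneg, neg_abs_le]

noncomputable def modelPair (l s : ℝ) : H1Pair 1 where
  a := fun x => ∫ t in Set.Ioc (0:ℝ) x, mda s t
  b := fun x => 1 + ∫ t in Set.Ioc (0:ℝ) x, mdb (3*l*s/2) t
  da := mda s
  db := mdb (3*l*s/2)
  da_mem := mda_memL2 s
  db_mem := mdb_memL2 (3*l*s/2)
  a_ftc := by intro x hx; simp [Set.Ioc_self]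
  b_ftc := by intro x hx; simp [Set.Ioc_self]

noncomputable def h0 (l s : ℝ) : ℝ → ℝ := fun t =>
  if t ≤ 1/3 then (3*l*s/2)^2*t
  else if t ≤ 2/3 then 3*l*(1-l*s/2)*s
  else (3*l*s/2)^2*(1-t)

lemma h0_int1 (l s : ℝ) : IntegrableOn (h0 l s) (Set.Ioc (0:ℝ) (1/3)) :=
  ((show Continuous fun t : ℝ => (3*l*s/2)^2*t by fun_prop).integrableOn_Ioc).congr_fun
    (fun t ht => by unfold h0; rw [if_pos ht.2]) measurableSet_Ioc

lemma h0_int2 (l s : ℝ) : IntegrableOn (h0 l s) (Set.Ioc (1/3:ℝ) (2/3)) :=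
  (integrableOn_const (C := 3*l*(1-l*s/2)*s) measure_Ioc_lt_top.ne).congr_fun
    (fun t ht => by unfold h0; rw [if_neg (not_le.mpr ht.1), if_pos ht.2]) measurableSet_Ioc

lemma h0_int3 (l s : ℝ) : IntegrableOn (h0 l s) (Set.Ioc (2/3:ℝ) 1) :=
  ((show Continuous fun t : ℝ => (3*l*s/2)^2*(1-t) by fun_prop).integrableOn_Ioc).congr_fun
    (fun t ht => by
      unfold h0
      rw [if_neg (by linarith [ht.1] : ¬ t ≤ 1/3), if_neg (not_le.mpr ht.1)]) measurableSet_Ioc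

lemma h0_integral (l s : ℝ) :
    ∫ t in Set.Ioo (0:ℝ) 1, h0 l s t = l*s - (l*s)^2/4 := by
  have h23 : IntegrableOn (h0 l s) (Set.Ioc (1/3:ℝ) 1) := by
    rw [show Set.Ioc (1/3:ℝ) 1 = Set.Ioc (1/3:ℝ) (2/3) ∪ Set.Ioc (2/3:ℝ) 1 from
      (Set.Ioc_union_Ioc_eq_Ioc (by norm_num) (by norm_num)).symm]
    exact (h0_int2 l s).union (h0_int3 l s)
  rw [← integral_Ioc_eq_integral_Ioo,
    ← Set.Ioc_union_Ioc_eq_Ioc (by norm_num : (0:ℝ) ≤ 1/3) (by norm_num : (1/3:ℝ) ≤ 1),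
    setIntegral_union (Set.Ioc_disjoint_Ioc_of_le le_rfl) measurableSet_Ioc (h0_int1 l s) h23,
    ← Set.Ioc_union_Ioc_eq_Ioc (by norm_num : (1/3:ℝ) ≤ 2/3) (by norm_num : (2/3:ℝ) ≤ 1),
    setIntegral_union (Set.Ioc_disjoint_Ioc_of_le le_rfl) measurableSet_Ioc (h0_int2 l s) (h0_int3 l s)]
  have e1 : ∫ t in Set.Ioc (0:ℝ) (1/3), h0 l s t = (3*l*s/2)^2/18 := by
    rw [setIntegral_congr_fun measurableSet_Ioc (g := fun t => (3*l*s/2)^2*t)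
      (fun t ht => by unfold h0; rw [if_pos ht.2]),
      ← intervalIntegral.integral_of_le (by norm_num : (0:ℝ) ≤ 1/3),
      intervalIntegral.integral_const_mul, integral_id]
    norm_num
    ring
  have e2 : ∫ t in Set.Ioc (1/3:ℝ) (2/3), h0 l s t = l*(1-l*s/2)*s := by
    rw [setIntegral_congr_fun measurableSet_Ioc (g := fun _ => 3*l*(1-l*s/2)*s)
      (fun t ht => by unfold h0; rw [if_neg (not_le.mpr ht.1), if_pos ht.2]),
      setIntegral_const, Real.volume_real_Ioc_of_le (by norm_num), smul_eq_mul]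
    ring
  have e3 : ∫ t in Set.Ioc (2/3:ℝ) 1, h0 l s t = (3*l*s/2)^2/18 := by
    rw [setIntegral_congr_fun measurableSet_Ioc (g := fun t => (3*l*s/2)^2 - (3*l*s/2)^2*t)
      (fun t ht => by
        unfold h0
        rw [if_neg (by linarith [ht.1] : ¬ t ≤ 1/3), if_neg (not_le.mpr ht.1)]; ring),
      ← intervalIntegral.integral_of_le (by norm_num : (2/3:ℝ) ≤ 1),
      intervalIntegral.integral_sub (intervalIntegrable_const)
        ((show Continuous fun t : ℝ => (3*l*s/2)^2*t by fun_prop).intervalIntegrable _ _),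
      intervalIntegral.integral_const, intervalIntegral.integral_const_mul, integral_id]
    norm_num
    ring
  rw [e1, e2, e3]
  ring

lemma modelPair_b (l s x : ℝ) :
    (modelPair l s).b x = 1 + ∫ t in Set.Ioc (0:ℝ) x, mdb (3*l*s/2) t := rfl

lemma modelPair_admissible (l s : ℝ) (hl : 0 < l) (hs0 : 0 ≤ s) (hs2 : l*s ≤ 2) :
    (modelPair l s).Admissible s := by
  have hc0 : (0:ℝ) ≤ 3*l*s/2 := by positivity
  have hc3 : 3*l*s/2 ≤ 3 := by nlinarith
  refine ⟨?_, ?_, ?_, ?_, ?_⟩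
  · intro t ht
    rw [Set.mem_Icc, modelPair_b]
    rcases le_or_gt t (1/3) with h1 | h1
    · rw [intB1 _ t ht.1 h1]
      constructor <;> nlinarith [ht.1, mul_nonneg hc0 ht.1]
    · rcases le_or_gt t (2/3) with h2 | h2
      · rw [intB2 _ t h1.le h2]; constructor <;> nlinarith
      · rw [intB3 _ t h2.le]
        constructor <;> nlinarith [ht.2, mul_nonneg hc0 (by linarith [ht.2] : (0:ℝ) ≤ 1 - t)]
  · show (∫ t in Set.Ioc (0:ℝ) 0, mda s t) = 0
    simp [Set.Ioc_self]
  · show (∫ t in Set.Ioc (0:ℝ) 1, mda s t) = s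
    exact intA3 s 1 (by norm_num)
  · show (1:ℝ) + ∫ t in Set.Ioc (0:ℝ) 0, mdb (3*l*s/2) t = 1
    simp [Set.Ioc_self]
  · show (1:ℝ) + ∫ t in Set.Ioc (0:ℝ) 1, mdb (3*l*s/2) t = 1
    rw [intB3 _ 1 (by norm_num)]; ring

lemma modelPair_key (l s : ℝ) (hl : 0 < l) (hs0 : 0 ≤ s) (hs2 : l*s ≤ 2) :
    ∀ t ∈ Set.Ioo (0:ℝ) 1,
      Real.sqrt ((damageExt (fun x => l*x/(1-x)) l ((modelPair l s).b t))^2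
          * ((modelPair l s).da t)^2
        + (1 - (modelPair l s).b t)^2 * ((modelPair l s).db t)^2) = h0 l s t := by
  intro t ht
  rcases le_or_gt t (1/3) with h1 | h1
  · have hb : (modelPair l s).b t = 1 - 3*l*s/2*t := by
      rw [modelPair_b, intB1 _ t ht.1.le h1]; ring
    have hda : (modelPair l s).da t = 0 := if_pos h1
    have hdb : (modelPair l s).db t = -(3*l*s/2) := if_pos h1
    unfold h0
    rw [if_pos h1, hb, hda, hdb,
      show (damageExt (fun x => l*x/(1-x)) l (1 - 3*l*s/2*t))^2 * (0:ℝ)^2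
          + (1-(1-3*l*s/2*t))^2 * (-(3*l*s/2))^2 = ((3*l*s/2)^2*t)^2 from by ring]
    exact Real.sqrt_sq (mul_nonneg (sq_nonneg _) ht.1.le)
  · rcases le_or_gt t (2/3) with h2 | h2
    · have hb : (modelPair l s).b t = 1 - l*s/2 := by
        rw [modelPair_b, intB2 _ t h1.le h2]; ring
      have hda : (modelPair l s).da t = 3*s := by
        show mda s t = 3*s
        unfold mda; rw [if_neg (not_le.mpr h1), if_pos h2]
      have hdb : (modelPair l s).db t = 0 := by
        show mdb (3*l*s/2) t = 0
        unfold mdb; rw [if_neg (not_le.mpr h1), if_pos h2]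
      unfold h0
      rw [if_neg (not_le.mpr h1), if_pos h2, hb, hda, hdb]
      by_cases hs : s = 0
      · subst hs; norm_num
      · have hls : l*s/2 ≠ 0 := by
          have : l*s ≠ 0 := mul_ne_zero hl.ne' hs
          intro h; apply this; linarith
        have hne : (1 - l*s/2) ≠ 1 := by
          intro h; apply hls; linarith
        have hD : damageExt (fun x => l*x/(1-x)) l (1-l*s/2) = l*(1-l*s/2) := by
          unfold damageExt
          rw [if_neg hne]
          show (1 - (1 - l*s/2)) * (l*(1-l*s/2)/(1-(1-l*s/2))) = l*(1-l*s/2)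
          rw [show (1:ℝ) - (1-l*s/2) = l*s/2 from by ring, mul_comm,
            div_mul_cancel₀ _ hls]
        rw [hD,
          show (l*(1-l*s/2))^2*(3*s)^2 + (1-(1-l*s/2))^2*(0:ℝ)^2
            = (3*l*(1-l*s/2)*s)^2 from by ring]
        exact Real.sqrt_sq (by
          nlinarith [mul_nonneg (mul_nonneg hl.le
            (show (0:ℝ) ≤ 1 - l*s/2 by linarith)) hs0])
    · have hb : (modelPair l s).b t = 1 - 3*l*s/2*(1-t) := by
        rw [modelPair_b, intB3 _ t h2.le]; ring
      have hda : (modelPair l s).da t = 0 := by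
        show mda s t = 0
        unfold mda; rw [if_neg (by linarith : ¬ t ≤ 1/3), if_neg (not_le.mpr h2)]
      have hdb : (modelPair l s).db t = 3*l*s/2 := by
        show mdb (3*l*s/2) t = 3*l*s/2
        unfold mdb; rw [if_neg (by linarith : ¬ t ≤ 1/3), if_neg (not_le.mpr h2)]
      unfold h0
      rw [if_neg (by linarith : ¬ t ≤ 1/3), if_neg (not_le.mpr h2), hb, hda, hdb,
        show (damageExt (fun x => l*x/(1-x)) l (1 - 3*l*s/2*(1-t)))^2 * (0:ℝ)^2
          + (1-(1-3*l*s/2*(1-t)))^2 * (3*l*s/2)^2 = ((3*l*s/2)^2*(1-t))^2 from by ring]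
      exact Real.sqrt_sq (mul_nonneg (sq_nonneg _) (by linarith [ht.2]))

lemma modelPair_energy (l s : ℝ) (hl : 0 < l) (hs0 : 0 ≤ s) (hs2 : l*s ≤ 2) :
    surfEnergy (fun x => l*x/(1-x)) l (modelPair l s)
      = ENNReal.ofReal (l*s - (l*s)^2/4) := by
  have hint : Integrable (h0 l s) (volume.restrict (Set.Ioo (0:ℝ) 1)) := by
    have : IntegrableOn (h0 l s) (Set.Ioc (0:ℝ) 1) := by
      rw [show Set.Ioc (0:ℝ) 1 = Set.Ioc (0:ℝ) (1/3) ∪ Set.Ioc (1/3:ℝ) 1 from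
        (Set.Ioc_union_Ioc_eq_Ioc (by norm_num) (by norm_num)).symm]
      refine (h0_int1 l s).union ?_
      rw [show Set.Ioc (1/3:ℝ) 1 = Set.Ioc (1/3:ℝ) (2/3) ∪ Set.Ioc (2/3:ℝ) 1 from
        (Set.Ioc_union_Ioc_eq_Ioc (by norm_num) (by norm_num)).symm]
      exact (h0_int2 l s).union (h0_int3 l s)
    exact this.mono_set Set.Ioo_subset_Ioc_self
  have hnn : 0 ≤ᵐ[volume.restrict (Set.Ioo (0:ℝ) 1)] h0 l s := by
    refine (ae_restrict_iff' measurableSet_Ioo).mpr (ae_of_all _ fun t ht => ?_)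
    simp only [Pi.zero_apply]
    unfold h0
    split_ifs with hh1 hh2
    · exact mul_nonneg (sq_nonneg _) ht.1.le
    · nlinarith [mul_nonneg (mul_nonneg hl.le
        (show (0:ℝ) ≤ 1 - l*s/2 by linarith)) hs0]
    · exact mul_nonneg (sq_nonneg _) (by linarith [ht.2])
  unfold surfEnergy
  rw [setLIntegral_congr_fun_ae measurableSet_Ioo
      (ae_of_all _ fun t ht => by rw [modelPair_key l s hl hs0 hs2 t ht]),
    ← ofReal_integral_eq_lintegral_ofReal hint hnn, h0_integral]

/-- In the model case `f(s) = ℓ s/(1−s)`, the surface energy density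
satisfies `g(s) ≤ ℓ s − (ℓ s)²/4` on `[0, 2/ℓ]`; in particular `g(s) < min(1, ℓ s)`
for all `s ∈ (0, 2/ℓ)`, so `g` does not coincide with `min(1, ℓ s)`. -/
theorem surfDensity_model_case_strict (l : ℝ) (hl : 0 < l) :
    (∀ s ∈ Set.Icc (0:ℝ) (2 / l),
      surfDensity (fun x => l * x / (1 - x)) l s ≤ l * s - (l * s)^2 / 4) ∧
    (∀ s ∈ Set.Ioo (0:ℝ) (2 / l),
      surfDensity (fun x => l * x / (1 - x)) l s < min 1 (l * s)) := by
  have main : ∀ s ∈ Set.Icc (0:ℝ) (2 / l),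
      surfDensity (fun x => l * x / (1 - x)) l s ≤ l * s - (l * s)^2 / 4 := by
    rintro s ⟨hs0, hsle⟩
    have hs2 : l*s ≤ 2 := by
      have := (le_div_iff₀ hl).mp hsle; linarith [mul_comm s l]
    have hR : 0 ≤ l*s - (l*s)^2/4 := by nlinarith [mul_nonneg hl.le hs0]
    refine ENNReal.toReal_le_of_le_ofReal hR ?_
    calc (⨅ (P : H1Pair 1) (_ : P.Admissible s), surfEnergy (fun x => l * x / (1 - x)) l P)
        ≤ ⨅ (_ : (modelPair l s).Admissible s),
            surfEnergy (fun x => l * x / (1 - x)) l (modelPair l s) := iInf_le _ _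
      _ ≤ surfEnergy (fun x => l * x / (1 - x)) l (modelPair l s) :=
          iInf_le _ (modelPair_admissible l s hl hs0 hs2)
      _ = ENNReal.ofReal (l*s - (l*s)^2/4) := modelPair_energy l s hl hs0 hs2
  refine ⟨main, ?_⟩
  rintro s ⟨hs0, hslt⟩
  have hls2 : l*s < 2 := by
    have := (lt_div_iff₀ hl).mp hslt; linarith [mul_comm s l]
  have hls0 : 0 < l*s := mul_pos hl hs0
  refine lt_of_le_of_lt (main s ⟨hs0.le, hslt.le⟩) ?_
  rw [lt_min_iff]
  constructor
  · nlinarith [mul_pos (show (0:ℝ) < 1 - l*s/2 by linarith) (show (0:ℝ) < 1 - l*s/2 by linarith)]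
  · nlinarith [mul_pos hls0 hls0]
end
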